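/- arXiv:2508.14186 — 7 statements merged into one kernel-verified Lean document; each statement's English description precedes it below -/
import Mathlib

section
/- For every finite rooted tree $T$, $e(T) \geq 2\,e(\lfloor T/2 \rfloor)$, where $e$ denotes the number of edges. -/
open Classical

noncomputable section

/-- The infinite hypercube: vertices are `ℕ → Bool`, adjacent iff they differ
in exactly one coordinate. -/
def Qinf : SimpleGraph (ℕ → Bool) where
  Adj x y := ∃ i, x i ≠ y i ∧ ∀ j, j ≠ i → x j = y j
  symm := by
    constructor
    rintro x y ⟨i, h1, h2⟩
    exact ⟨i, h1.symm, fun j hj => (h2 j hj).symm⟩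
  loopless := by
    constructor
    rintro x ⟨i, h1, -⟩
    exact h1 rfl

/-- The coordinate of an edge `xy` of the infinite hypercube. -/
def coordOf (x y : ℕ → Bool) : ℕ := sInf {i | x i ≠ y i}

lemma coordOf_symm (x y : ℕ → Bool) : coordOf x y = coordOf y x := by
  unfold coordOf
  congr 1
  ext i
  exact ne_comm

def ecoord {α : Type*} (g : α → ℕ → Bool) : Sym2 α → ℕ :=
  Sym2.lift ⟨fun a b => coordOf (g a) (g b), fun a b => coordOf_symm _ _⟩

/-- degree as the cardinality of the neighbor set -/
def degOf {V : Type*} (G : SimpleGraph V) (v : V) : ℕ := (G.neighborSet v).ncard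

/-- `w` is a descendant of `v` in the tree `T` rooted at `root`. -/
def Desc {V : Type*} (T : SimpleGraph V) (root v w : V) : Prop :=
  T.dist root v + T.dist v w = T.dist root w

/-- the largest level among descendants of `v` -/
def lamMax {V : Type*} [Fintype V] (T : SimpleGraph V) (root v : V) : ℕ :=
  Finset.univ.sup fun w => if Desc T root v w then T.dist root w else 0

/-- the vertex set of `⌊T/2⌋` -/
def halfFloor {V : Type*} [Fintype V] (T : SimpleGraph V) (root : V) : Set V :=
  {v | T.dist root v ≤ lamMax T root v / 2}

/-- the vertex set of `⌈T/2⌉` -/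
def halfCeil {V : Type*} [Fintype V] (T : SimpleGraph V) (root : V) : Set V :=
  {v | T.dist root v ≤ (lamMax T root v + 1) / 2}

/-- the number of edges of `T` with both endpoints in `S` -/
def edgesIn {V : Type*} (T : SimpleGraph V) (S : Set V) : ℕ :=
  {e ∈ T.edgeSet | ∀ x ∈ e, x ∈ S}.ncard

/-- a leaf of the rooted tree: a non-root vertex with no descendant other than itself -/
def IsRootLeaf {V : Type*} (T : SimpleGraph V) (root v : V) : Prop :=
  v ≠ root ∧ ∀ w, Desc T root v w → w = v

/-- path-distinctness of the map `g` on the vertex set `S` of a rooted tree: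
for every vertex of `S`, the edges of the path from the root get distinct coordinates -/
def PathDistinctOn {V : Type*} (T : SimpleGraph V) (root : V)
    (S : Set V) (g : V → ℕ → Bool) : Prop :=
  ∀ v ∈ S, ∀ p : T.Walk root v, p.IsPath →
    (p.edges.map (ecoord g)).Pairwise (· ≠ ·)

namespace Stmt4Aux

open SimpleGraph

variable {V : Type*} {T : SimpleGraph V} {root u v w x z u' : V}

lemma exists_split {a b : V} (p : T.Walk a b) (k : ℕ) (hk : k ≤ p.length) :
    ∃ (c : V) (q : T.Walk a c) (r : T.Walk c b),
      c = p.getVert k ∧ q.length = k ∧ q.length + r.length = p.length := by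
  induction p generalizing k with
  | nil =>
    simp only [SimpleGraph.Walk.length_nil, Nat.le_zero] at hk
    subst hk
    exact ⟨_, .nil, .nil, (SimpleGraph.Walk.getVert_zero _).symm, rfl, rfl⟩
  | @cons a b c h p ih =>
    cases k with
    | zero =>
      exact ⟨a, .nil, .cons h p, (SimpleGraph.Walk.getVert_zero _).symm, rfl, by simp⟩
    | succ k =>
      obtain ⟨c', q, r, hc, hq, hqr⟩ := ih k (by simpa using hk)
      refine ⟨c', .cons h q, r, ?_, by simp [hq], by simp; omega⟩
      rw [hc, SimpleGraph.Walk.getVert_cons_succ]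

lemma path_length {a b : V} (hT : T.IsTree) (p : T.Walk a b) (hp : p.IsPath) :
    p.length = T.dist a b := by
  obtain ⟨q, hq⟩ := hT.isConnected.exists_walk_length_eq_dist a b
  have hq' : q.IsPath := q.isPath_of_length_eq_dist hq
  rw [(hT.existsUnique_path a b).unique hp hq', hq]

lemma dist_getVert {a b : V} (hT : T.IsTree) (p : T.Walk a b) (hp : p.length = T.dist a b)
    {k : ℕ} (hk : k ≤ p.length) :
    T.dist a (p.getVert k) = k ∧ T.dist a (p.getVert k) + T.dist (p.getVert k) b = p.length := by
  obtain ⟨c, q, r, hc, hq, hqr⟩ := exists_split p k hk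
  subst hc
  have h1 := SimpleGraph.dist_le q
  have h2 := SimpleGraph.dist_le r
  have h3 := hT.isConnected.dist_triangle (u := a) (v := p.getVert k) (w := b)
  omega

lemma desc_trans (hT : T.IsTree) (h1 : Desc T root u v) (h2 : Desc T root v w) :
    Desc T root u w := by
  unfold Desc at *
  have t1 := hT.isConnected.dist_triangle (u := u) (v := v) (w := w)
  have t2 := hT.isConnected.dist_triangle (u := root) (v := u) (w := w)
  omega

lemma desc_self : Desc T root v v := by
  unfold Desc; simp [SimpleGraph.dist_self]

lemma lamMax_le [Fintype V] (hd : Desc T root v w) :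
    T.dist root w ≤ lamMax T root v := by
  unfold lamMax
  have h2 := Finset.le_sup (f := fun w => if Desc T root v w then T.dist root w else 0)
    (Finset.mem_univ w)
  simpa only [if_pos hd] using h2

lemma lamMax_mono (hT : T.IsTree) [Fintype V] (hd : Desc T root u v) :
    lamMax T root v ≤ lamMax T root u := by
  apply Finset.sup_le
  intro w _
  split_ifs with h
  · exact lamMax_le (desc_trans hT hd h)
  · exact Nat.zero_le _

lemma lamMax_achieved (hT : T.IsTree) [Fintype V] (hv : v ≠ root) :
    ∃ w, Desc T root v w ∧ T.dist root w = lamMax T root v := by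
  obtain ⟨w, -, hw⟩ := Finset.exists_mem_eq_sup Finset.univ ⟨v, Finset.mem_univ v⟩
    (fun w => if Desc T root v w then T.dist root w else 0)
  have hpos : 0 < T.dist root v := hT.isConnected.pos_dist_of_ne (fun h => hv h.symm)
  have hself : T.dist root v ≤ lamMax T root v := lamMax_le desc_self
  by_cases h : Desc T root v w
  · exact ⟨w, h, by rw [show lamMax T root v = _ from hw, if_pos h]⟩
  · exfalso
    rw [show lamMax T root v = _ from hw, if_neg h] at hself
    omega

lemma getVert_of_desc (hT : T.IsTree) (hx : Desc T root x z)
    (P : T.Walk root z) (hP : P.length = T.dist root z) :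
    x = P.getVert (T.dist root x) := by
  obtain ⟨q1, h1⟩ := hT.isConnected.exists_walk_length_eq_dist root x
  obtain ⟨q2, h2⟩ := hT.isConnected.exists_walk_length_eq_dist x z
  have hW : (q1.append q2).length = T.dist root z := by
    rw [SimpleGraph.Walk.length_append]; unfold Desc at hx; omega
  have hPW : P = q1.append q2 :=
    (hT.existsUnique_path root z).unique (P.isPath_of_length_eq_dist hP)
      ((q1.append q2).isPath_of_length_eq_dist hW)
  rw [hPW, SimpleGraph.Walk.getVert_append, ← h1]
  simp

lemma desc_of_desc_le (hT : T.IsTree) (huz : Desc T root u z) (hvz : Desc T root v z)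
    (h : T.dist root u ≤ T.dist root v) : Desc T root u v := by
  obtain ⟨q, hq⟩ := hT.isConnected.exists_walk_length_eq_dist root v
  obtain ⟨r, hr⟩ := hT.isConnected.exists_walk_length_eq_dist v z
  have hW : (q.append r).length = T.dist root z := by
    rw [SimpleGraph.Walk.length_append]; unfold Desc at hvz; omega
  have hu := getVert_of_desc hT huz (q.append r) hW
  rcases eq_or_lt_of_le h with heq | hlt
  · have : u = v := by
      rw [hu, SimpleGraph.Walk.getVert_append, heq, ← hq]
      simp
    rw [this]; exact desc_self
  · have hg : (q.append r).getVert (T.dist root u) = q.getVert (T.dist root u) := by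
      rw [SimpleGraph.Walk.getVert_append, if_pos (by omega)]
    rw [hg] at hu
    obtain ⟨d1, d2⟩ := dist_getVert hT q hq (k := T.dist root u) (by omega)
    rw [← hu] at d1 d2
    unfold Desc
    omega

lemma m_inj_core (hT : T.IsTree) [Fintype V] (huz : Desc T root u z) (hvz : Desc T root v z)
    (hu : T.dist root z + T.dist root u = lamMax T root u + 1)
    (hv : T.dist root z + T.dist root v = lamMax T root v + 1)
    (hle : T.dist root u ≤ T.dist root v) : u = v := by
  have hd := desc_of_desc_le hT huz hvz hle
  have hm := lamMax_mono hT hd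
  have h0 : T.dist u v = 0 := by unfold Desc at hd; omega
  exact hT.isConnected.dist_eq_zero_iff.mp h0

lemma m_inj (hT : T.IsTree) [Fintype V] (huz : Desc T root u z) (hvz : Desc T root v z)
    (hu : T.dist root z + T.dist root u = lamMax T root u + 1)
    (hv : T.dist root z + T.dist root v = lamMax T root v + 1) : u = v := by
  rcases le_total (T.dist root u) (T.dist root v) with h | h
  · exact m_inj_core hT huz hvz hu hv h
  · exact (m_inj_core hT hvz huz hv hu h).symm

lemma exists_m (hT : T.IsTree) [Fintype V] (hv : v ∈ halfFloor T root) (hvr : v ≠ root) :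
    ∃ z, Desc T root v z ∧ T.dist root z + T.dist root v = lamMax T root v + 1 ∧
      z ∉ halfFloor T root := by
  have hℓ : 0 < T.dist root v := hT.isConnected.pos_dist_of_ne (fun h => hvr h.symm)
  have h2ℓ : 2 * T.dist root v ≤ lamMax T root v := by
    have : T.dist root v ≤ lamMax T root v / 2 := hv
    omega
  obtain ⟨w, hw, hwd⟩ := lamMax_achieved hT hvr
  obtain ⟨Q, hQ⟩ := hT.isConnected.exists_walk_length_eq_dist v w
  have hdesc : T.dist root v + T.dist v w = lamMax T root v := by
    unfold Desc at hw; omega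
  have hkle : lamMax T root v + 1 - 2 * T.dist root v ≤ Q.length := by omega
  obtain ⟨hz1, hz2⟩ := dist_getVert hT Q hQ hkle
  set z := Q.getVert (lamMax T root v + 1 - 2 * T.dist root v) with hz
  have t1 := hT.isConnected.dist_triangle (u := root) (v := v) (w := z)
  have t2 := hT.isConnected.dist_triangle (u := root) (v := z) (w := w)
  have hdz : T.dist root z = T.dist root v + (lamMax T root v + 1 - 2 * T.dist root v) := by
    unfold Desc at hw; omega
  have hdesc2 : Desc T root v z := by unfold Desc; omega
  refine ⟨z, hdesc2, by omega, ?_⟩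
  intro hzS
  have hzS' : T.dist root z ≤ lamMax T root z / 2 := hzS
  have hlam : lamMax T root z ≤ lamMax T root v := by
    apply Finset.sup_le
    intro w' _
    split_ifs with h
    · exact lamMax_le (desc_trans hT hdesc2 h)
    · exact Nat.zero_le _
  omega

lemma adj_cases (hT : T.IsTree) (h : T.Adj u z) :
    T.dist root u + 1 = T.dist root z ∨ T.dist root z + 1 = T.dist root u := by
  obtain ⟨P, hP⟩ := hT.isConnected.exists_walk_length_eq_dist root z
  by_cases hu : u ∈ P.support
  · obtain ⟨j, hj, hjle⟩ := SimpleGraph.Walk.mem_support_iff_exists_getVert.mp hu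
    obtain ⟨d1, d2⟩ := dist_getVert hT P hP hjle
    rw [hj] at d1 d2
    have h1 : T.dist u z = 1 := SimpleGraph.dist_eq_one_iff_adj.mpr h
    left; omega
  · right
    have hW : (P.concat h.symm).IsPath := by
      rw [← SimpleGraph.Walk.isPath_reverse_iff, SimpleGraph.Walk.reverse_concat]
      exact (P.isPath_of_length_eq_dist hP).reverse.cons
        (by simpa [SimpleGraph.Walk.support_reverse] using hu)
    have := path_length hT _ hW
    rw [SimpleGraph.Walk.length_concat] at this
    omega

lemma parent_unique (hT : T.IsTree) (h1 : T.Adj u z) (h2 : T.Adj u' z)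
    (hd1 : T.dist root u + 1 = T.dist root z) (hd2 : T.dist root u' + 1 = T.dist root z) :
    u = u' := by
  obtain ⟨P, hP⟩ := hT.isConnected.exists_walk_length_eq_dist root z
  have claim : ∀ q, T.Adj q z → T.dist root q + 1 = T.dist root z →
      q = P.getVert (T.dist root z - 1) := by
    intro q hq hdq
    by_cases hmem : q ∈ P.support
    · obtain ⟨j, hj, hjle⟩ := SimpleGraph.Walk.mem_support_iff_exists_getVert.mp hmem
      obtain ⟨d1, d2⟩ := dist_getVert hT P hP hjle
      rw [hj] at d1 d2
      have hqz : T.dist q z = 1 := SimpleGraph.dist_eq_one_iff_adj.mpr hq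
      have : j = T.dist root z - 1 := by omega
      rw [← hj, this]
    · exfalso
      have hW : (P.concat hq.symm).IsPath := by
        rw [← SimpleGraph.Walk.isPath_reverse_iff, SimpleGraph.Walk.reverse_concat]
        exact (P.isPath_of_length_eq_dist hP).reverse.cons
          (by simpa [SimpleGraph.Walk.support_reverse] using hmem)
      have := path_length hT _ hW
      rw [SimpleGraph.Walk.length_concat] at this
      omega
  rw [claim u h1 hd1, claim u' h2 hd2]

lemma exists_parent (hT : T.IsTree) (hz : z ≠ root) :
    ∃ p, T.Adj p z ∧ T.dist root p + 1 = T.dist root z := by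
  obtain ⟨P, hP⟩ := hT.isConnected.exists_walk_length_eq_dist root z
  have hd : 0 < T.dist root z := hT.isConnected.pos_dist_of_ne (fun h => hz h.symm)
  refine ⟨P.getVert (T.dist root z - 1), ?_, ?_⟩
  · have hadj := P.adj_getVert_succ (i := T.dist root z - 1) (by omega)
    have h1 : T.dist root z - 1 + 1 = P.length := by omega
    rw [h1, SimpleGraph.Walk.getVert_length] at hadj
    exact hadj
  · obtain ⟨d1, d2⟩ := dist_getVert hT P hP (k := T.dist root z - 1) (by omega)
    omega

end Stmt4Aux

/-- for every finite rooted tree, `e(T) ≥ 2 e(⌊T/2⌋)`. -/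
theorem stmt_4 {V : Type*} [Fintype V] (T : SimpleGraph V) (hT : T.IsTree) (root : V) :
    2 * edgesIn T (halfFloor T root) ≤ T.edgeSet.ncard := by
  classical
  have hfinE : T.edgeSet.Finite := Set.toFinite _
  set S := halfFloor T root with hSdef
  set A := {e ∈ T.edgeSet | ∀ x ∈ e, x ∈ S} with hAdef
  set B := {e ∈ T.edgeSet | ¬ ∀ x ∈ e, x ∈ S} with hBdef
  have hAfin : A.Finite := hfinE.subset (fun e he => he.1)
  have hBfin : B.Finite := hfinE.subset (fun e he => he.1)
  have hdisj : Disjoint A B := by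
    rw [Set.disjoint_left]
    rintro e ⟨-, h1⟩ ⟨-, h2⟩
    exact h2 h1
  have hunion : A ∪ B = T.edgeSet := by
    ext e
    constructor
    · rintro (⟨h, -⟩ | ⟨h, -⟩) <;> exact h
    · intro h
      by_cases hp : ∀ x ∈ e, x ∈ S
      · exact Or.inl ⟨h, hp⟩
      · exact Or.inr ⟨h, hp⟩
  have hsum : A.ncard + B.ncard = T.edgeSet.ncard := by
    rw [← Set.ncard_union_eq hdisj hAfin hBfin, hunion]
  have key : ∀ e ∈ A, ∃ f, f ∈ B ∧
      ∃ z p v, f = s(p, z) ∧ T.dist root p + 1 = T.dist root z ∧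
        Desc T root v z ∧ T.dist root z + T.dist root v = lamMax T root v + 1 ∧
        ∃ u, e = s(u, v) ∧ T.Adj u v ∧ T.dist root u + 1 = T.dist root v := by
    intro e he
    obtain ⟨heE, heS⟩ := he
    have main : ∀ a b : V, T.Adj a b → T.dist root a + 1 = T.dist root b → b ∈ S →
        ∃ f, f ∈ B ∧
          ∃ z p v, f = s(p, z) ∧ T.dist root p + 1 = T.dist root z ∧
            Desc T root v z ∧ T.dist root z + T.dist root v = lamMax T root v + 1 ∧
            ∃ u, s(a, b) = s(u, v) ∧ T.Adj u v ∧ T.dist root u + 1 = T.dist root v := by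
      intro a b hab hd hbS
      have hbr : b ≠ root := by
        intro h
        have h0 : T.dist root b = 0 := by rw [h]; exact SimpleGraph.dist_self
        omega
      rw [hSdef] at hbS
      obtain ⟨z, hz1, hz2, hz3⟩ := Stmt4Aux.exists_m hT hbS hbr
      have hself : T.dist root b ≤ lamMax T root b :=
        Stmt4Aux.lamMax_le Stmt4Aux.desc_self
      have hzpos : 0 < T.dist root z := by omega
      have hzr : z ≠ root := by
        intro h
        rw [h] at hzpos
        simp [SimpleGraph.dist_self] at hzpos
      obtain ⟨p, hpz, hpd⟩ := Stmt4Aux.exists_parent hT hzr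
      refine ⟨s(p, z), ⟨T.mem_edgeSet.mpr hpz, ?_⟩,
        z, p, b, rfl, hpd, hz1, hz2, a, rfl, hab, hd⟩
      push_neg
      exact ⟨z, Sym2.mem_mk_right p z, by rw [hSdef]; exact hz3⟩
    revert heE heS
    refine Sym2.inductionOn e ?_
    intro a b heE heS
    have hab : T.Adj a b := T.mem_edgeSet.mp heE
    rcases Stmt4Aux.adj_cases (root := root) hT hab with hc | hc
    · exact main a b hab hc (heS b (Sym2.mem_mk_right a b))
    · rw [show (s(a, b) : Sym2 V) = s(b, a) from Sym2.eq_swap]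
      exact main b a hab.symm hc (heS a (Sym2.mem_mk_left a b))
  have hAB : A.ncard ≤ B.ncard := by
    apply Set.ncard_le_ncard_of_injOn
      (fun e => if h : e ∈ A then (key e h).choose else e) ?_ ?_ hBfin
    · intro e he
      simp only [dif_pos he]
      exact ((key e he).choose_spec).1
    · intro e he e' he' heq
      simp only [dif_pos he, dif_pos he'] at heq
      obtain ⟨-, z, p, v, hf, hpd, hdz, heq1, u, heu, huv, hud⟩ := (key e he).choose_spec
      obtain ⟨-, z', p', v', hf', hpd', hdz', heq1', u', heu', huv', hud'⟩ :=
        (key e' he').choose_spec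
      rw [hf, hf'] at heq
      obtain ⟨hz, hp⟩ : z = z' ∧ p = p' := by
        rcases Sym2.eq_iff.mp heq with ⟨h1, h2⟩ | ⟨h1, h2⟩
        · exact ⟨h2, h1⟩
        · subst h1; subst h2; exfalso; omega
      subst hz
      have hvv : v = v' := Stmt4Aux.m_inj hT hdz hdz' heq1 heq1'
      subst hvv
      have huu : u = u' := Stmt4Aux.parent_unique hT huv huv' hud hud'
      rw [heu, heu', huu]
  have hA : edgesIn T S = A.ncard := rfl
  omega
end
end

section
/- Let $T$ be a finite rooted tree. If $e(T) = 2\,e(\lfloor T/2 \rfloor)$, then $T$ is an even spider, i.e., every non-root vertex of $T$ has degree at most 2 and every leg (path from the root to a leaf) has even length. -/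
open Classical

noncomputable section

namespace Stmt5Aux

open SimpleGraph Finset

variable {V : Type*} {T : SimpleGraph V} {root : V}

lemma dist_getVert_le (hc : T.Connected) {x y : V} (p : T.Walk x y) :
    ∀ i j, i ≤ j → T.dist (p.getVert i) (p.getVert j) ≤ j - i := by
  induction p with
  | nil => intro i j _; simp [SimpleGraph.Walk.getVert, SimpleGraph.dist_self]
  | @cons a b c h q ih =>
    intro i j hij
    match i, j with
    | 0, 0 => simp [SimpleGraph.dist_self]
    | 0, (j+1) =>
      have h1 : T.dist a b ≤ 1 := by
        simpa using SimpleGraph.dist_le (SimpleGraph.Walk.cons h SimpleGraph.Walk.nil)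
      have h2 := ih 0 j (Nat.zero_le j)
      have h3 := hc.dist_triangle (u := a) (v := b) (w := q.getVert j)
      simp only [SimpleGraph.Walk.getVert_zero] at h2
      simp only [SimpleGraph.Walk.getVert_cons_succ, SimpleGraph.Walk.getVert_zero]
      omega
    | (i+1), (j+1) =>
      simpa using ih i j (by omega)

lemma getVert_dist (hc : T.Connected) {x y : V} (p : T.Walk x y)
    (hp : p.length = T.dist x y) {i j : ℕ} (hij : i ≤ j) (hj : j ≤ p.length) :
    T.dist x (p.getVert i) = i ∧ T.dist (p.getVert i) (p.getVert j) = j - i ∧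
      T.dist (p.getVert j) y = p.length - j := by
  have h1 : T.dist x (p.getVert i) ≤ i := by
    simpa using dist_getVert_le hc p 0 i (Nat.zero_le i)
  have h2 := dist_getVert_le hc p i j hij
  have h3 : T.dist (p.getVert j) y ≤ p.length - j := by
    simpa using dist_getVert_le hc p j p.length hj
  have t1 := hc.dist_triangle (u := x) (v := p.getVert i) (w := y)
  have t2 := hc.dist_triangle (u := p.getVert i) (v := p.getVert j) (w := y)
  omega

lemma lam_eq_zero_iff (hc : T.Connected) {v : V} : T.dist root v = 0 ↔ v = root := by
  rw [SimpleGraph.dist_comm]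
  exact hc.dist_eq_zero_iff

lemma desc_refl (v : V) : Desc T root v v := by
  simp [Desc, SimpleGraph.dist_self]

lemma desc_root (v : V) : Desc T root root v := by
  simp [Desc, SimpleGraph.dist_self]

lemma desc_trans (hc : T.Connected) {v u w : V} (h1 : Desc T root v u) (h2 : Desc T root u w) :
    Desc T root v w := by
  unfold Desc at *
  have t1 := hc.dist_triangle (u := v) (v := u) (w := w)
  have t2 := hc.dist_triangle (u := root) (v := v) (w := w)
  omega

lemma desc_level_le (hc : T.Connected) {v w : V} (h : Desc T root v w) :
    T.dist root v ≤ T.dist root w := by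
  unfold Desc at h; omega

lemma desc_eq_of_level_eq (hc : T.Connected) {v w : V} (h : Desc T root v w)
    (hl : T.dist root v = T.dist root w) : v = w := by
  unfold Desc at h
  have : T.dist v w = 0 := by omega
  rw [hc.dist_eq_zero_iff] at this
  exact this

/-- two ancestors of a common vertex are comparable (tree) -/
lemma desc_of_desc_desc (hT : T.IsTree) {v u w : V} (hv : Desc T root v w)
    (hu : Desc T root u w) (hl : T.dist root v ≤ T.dist root u) : Desc T root v u := by
  have hc := hT.isConnected
  -- build shortest walks
  obtain ⟨p1, hp1⟩ := hc.exists_walk_length_eq_dist root v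
  obtain ⟨p2, hp2⟩ := hc.exists_walk_length_eq_dist v w
  obtain ⟨q1, hq1⟩ := hc.exists_walk_length_eq_dist root u
  obtain ⟨q2, hq2⟩ := hc.exists_walk_length_eq_dist u w
  have hP : (p1.append p2).length = T.dist root w := by
    rw [SimpleGraph.Walk.length_append]; unfold Desc at hv; omega
  have hQ : (q1.append q2).length = T.dist root w := by
    rw [SimpleGraph.Walk.length_append]; unfold Desc at hu; omega
  have hPp : (p1.append p2).IsPath := (p1.append p2).isPath_of_length_eq_dist hP
  have hQp : (q1.append q2).IsPath := (q1.append q2).isPath_of_length_eq_dist hQ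
  have heq : p1.append p2 = q1.append q2 := by
    have := hT.IsAcyclic.path_unique ⟨p1.append p2, hPp⟩ ⟨q1.append q2, hQp⟩
    exact congrArg Subtype.val this
  have hvv : (p1.append p2).getVert (T.dist root v) = v := by
    rw [SimpleGraph.Walk.getVert_append]
    simp [hp1]
  have huu : (p1.append p2).getVert (T.dist root u) = u := by
    rw [heq, SimpleGraph.Walk.getVert_append]
    simp [hq1]
  have hlen : T.dist root u ≤ (p1.append p2).length := by
    rw [hP]; exact desc_level_le hc hu
  have := (getVert_dist hc (p1.append p2) hP hl hlen).2.1
  rw [hvv, huu] at this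
  unfold Desc
  have hle : T.dist root v ≤ T.dist root u := hl
  omega

lemma exists_ancestor (hc : T.Connected) {w : V} {k : ℕ} (hk : k ≤ T.dist root w) :
    ∃ u, Desc T root u w ∧ T.dist root u = k := by
  obtain ⟨p, hp⟩ := hc.exists_walk_length_eq_dist root w
  have hk' : k ≤ p.length := by omega
  obtain ⟨h1, h2, h3⟩ := getVert_dist hc p hp (Nat.zero_le k) hk'
  have hg0 : p.getVert 0 = root := p.getVert_zero
  rw [hg0] at h2
  refine ⟨p.getVert k, ?_, ?_⟩
  · unfold Desc
    omega
  · omega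

lemma ancestor_unique (hT : T.IsTree) {v u w : V} (hv : Desc T root v w)
    (hu : Desc T root u w) (hl : T.dist root v = T.dist root u) : v = u :=
  desc_eq_of_level_eq hT.isConnected (desc_of_desc_desc hT hv hu hl.le) hl

/-- adjacent vertices: one is the parent of the other -/
lemma adj_parent (hT : T.IsTree) {x y : V} (hxy : T.Adj x y) :
    (T.dist root x + 1 = T.dist root y ∧ Desc T root x y) ∨
      (T.dist root y + 1 = T.dist root x ∧ Desc T root y x) := by
  have hc := hT.isConnected
  have hd1 : T.dist x y = 1 := SimpleGraph.dist_eq_one_iff_adj.2 hxy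
  have hne : T.dist root x ≠ T.dist root y := by
    intro hEq
    obtain ⟨p, hp⟩ := hc.exists_walk_length_eq_dist root x
    have hpp : p.IsPath := p.isPath_of_length_eq_dist hp
    have hy : y ∉ p.support := by
      intro hy
      rw [SimpleGraph.Walk.mem_support_iff_exists_getVert] at hy
      obtain ⟨i, hi, hilen⟩ := hy
      have := (getVert_dist hc p hp (le_refl i) hilen).1
      rw [hi] at this
      have hiy : i = T.dist root y := by omega
      have : p.getVert i = x := by
        have hix : i = p.length := by omega
        rw [hix]; exact p.getVert_length
      rw [this] at hi
      exact (T.ne_of_adj hxy) hi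
    have hq : (p.concat hxy).IsPath := by
      rw [← SimpleGraph.Walk.isPath_reverse_iff, SimpleGraph.Walk.reverse_concat,
        SimpleGraph.Walk.cons_isPath_iff]
      refine ⟨(SimpleGraph.Walk.isPath_reverse_iff p).2 hpp, ?_⟩
      rw [SimpleGraph.Walk.support_reverse, List.mem_reverse]
      exact hy
    have hq2 : (p.concat hxy).length = p.length + 1 := SimpleGraph.Walk.length_concat p hxy
    obtain ⟨q, hql⟩ := hc.exists_walk_length_eq_dist root y
    have hqp : q.IsPath := q.isPath_of_length_eq_dist hql
    have : p.concat hxy = q := by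
      have := hT.IsAcyclic.path_unique ⟨p.concat hxy, hq⟩ ⟨q, hqp⟩
      exact congrArg Subtype.val this
    rw [this] at hq2
    omega
  have t1 := hc.dist_triangle (u := root) (v := x) (w := y)
  have t2 := hc.dist_triangle (u := root) (v := y) (w := x)
  have hd2 : T.dist y x = 1 := by rw [SimpleGraph.dist_comm]; exact hd1
  rw [hd1] at t1
  rw [hd2] at t2
  rcases Nat.lt_or_ge (T.dist root x) (T.dist root y) with h | h
  · left
    constructor
    · omega
    · unfold Desc; omega
  · right
    constructor
    · omega
    · unfold Desc; rw [hd2]; omega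

lemma adj_of_desc_succ (hc : T.Connected) {u v : V} (h : Desc T root u v)
    (hl : T.dist root u + 1 = T.dist root v) : T.Adj u v := by
  unfold Desc at h
  have : T.dist u v = 1 := by omega
  exact SimpleGraph.dist_eq_one_iff_adj.1 this

section FT

variable [Fintype V] (T root)

lemma le_lamMax {v w : V} (h : Desc T root v w) : T.dist root w ≤ lamMax T root v := by
  classical
  have := Finset.le_sup (f := fun w => if Desc T root v w then T.dist root w else 0)
    (Finset.mem_univ w)
  simp only [h, ↓reduceIte] at this
  exact this

lemma lam_le_lamMax (v : V) : T.dist root v ≤ lamMax T root v :=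
  le_lamMax T root (desc_refl v)

/-- the set of deepest descendants of `v` -/
def deepSet (v : V) : Finset V :=
  Finset.univ.filter fun w => Desc T root v w ∧ T.dist root w = lamMax T root v

lemma deepSet_nonempty (v : V) : (deepSet T root v).Nonempty := by
  classical
  obtain ⟨w0, _, hw0⟩ := Finset.exists_mem_eq_sup Finset.univ ⟨v, Finset.mem_univ v⟩
    (fun w => if Desc T root v w then T.dist root w else 0)
  by_cases hd : Desc T root v w0
  · refine ⟨w0, ?_⟩
    simp only [deepSet, Finset.mem_filter, Finset.mem_univ, true_and]
    rw [if_pos hd] at hw0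
    exact ⟨hd, hw0.symm⟩
  · have h0 : lamMax T root v = 0 := by
      rw [lamMax, hw0, if_neg hd]
    refine ⟨v, ?_⟩
    simp only [deepSet, Finset.mem_filter, Finset.mem_univ, true_and]
    have := lam_le_lamMax T root v
    exact ⟨desc_refl v, by omega⟩

/-- canonical deepest descendant -/
def Dv (v : V) : V :=
  (Fintype.equivFin V).symm
    (((deepSet T root v).image (Fintype.equivFin V)).min'
      ((deepSet_nonempty T root v).image _))

lemma Dv_mem (v : V) : Dv T root v ∈ deepSet T root v := by
  have := Finset.min'_mem ((deepSet T root v).image (Fintype.equivFin V))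
    ((deepSet_nonempty T root v).image _)
  rw [Finset.mem_image] at this
  obtain ⟨u, hu, h⟩ := this
  have : Dv T root v = u := by rw [Dv, h.symm]; simp
  rw [this]; exact hu

lemma Dv_desc (v : V) : Desc T root v (Dv T root v) := by
  have := Dv_mem T root v
  simp only [deepSet, Finset.mem_filter] at this
  exact this.2.1

lemma Dv_lam (v : V) : T.dist root (Dv T root v) = lamMax T root v := by
  have := Dv_mem T root v
  simp only [deepSet, Finset.mem_filter] at this
  exact this.2.2

lemma Dv_min {v u : V} (hu : u ∈ deepSet T root v) :
    Fintype.equivFin V (Dv T root v) ≤ Fintype.equivFin V u := by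
  have hm := Finset.min'_le ((deepSet T root v).image (Fintype.equivFin V))
    (Fintype.equivFin V u) (Finset.mem_image_of_mem _ hu)
  have : Fintype.equivFin V (Dv T root v) =
      ((deepSet T root v).image (Fintype.equivFin V)).min'
      ((deepSet_nonempty T root v).image _) := by
    rw [Dv]; simp
  rw [this]; exact hm

variable {T root}

lemma lamMax_le_of_desc (hc : T.Connected) {v u : V} (h : Desc T root v u) :
    lamMax T root u ≤ lamMax T root v := by
  classical
  rw [lamMax]
  apply Finset.sup_le
  intro w _
  by_cases hd : Desc T root u w
  · rw [if_pos hd]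
    exact le_lamMax T root (desc_trans hc h hd)
  · rw [if_neg hd]; exact Nat.zero_le _

/-- consistency of the canonical deepest descendant along chains -/
lemma Dv_eq_of_desc (hc : T.Connected) {v u : V} (h1 : Desc T root v u)
    (h2 : Desc T root u (Dv T root v)) : Dv T root u = Dv T root v := by
  have hmax : lamMax T root u = lamMax T root v := by
    have hle := lamMax_le_of_desc hc h1
    have hD : T.dist root (Dv T root v) = lamMax T root v := Dv_lam T root v
    have h3 := le_lamMax T root h2
    omega
  have hsub : deepSet T root u ⊆ deepSet T root v := by
    intro w hw
    simp only [deepSet, Finset.mem_filter, Finset.mem_univ, true_and] at hw ⊢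
    exact ⟨desc_trans hc h1 hw.1, by rw [hw.2, hmax]⟩
  have hmem : Dv T root v ∈ deepSet T root u := by
    simp only [deepSet, Finset.mem_filter, Finset.mem_univ, true_and]
    exact ⟨h2, by rw [Dv_lam, hmax]⟩
  have h3 := Dv_min T root hmem
  have h4 := Dv_min T root (hsub (Dv_mem T root u))
  have : Fintype.equivFin V (Dv T root u) = Fintype.equivFin V (Dv T root v) :=
    le_antisymm h3 h4
  exact (Fintype.equivFin V).injective this

lemma Dv_idem (hc : T.Connected) (v : V) :
    Dv T root (Dv T root v) = Dv T root v :=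
  Dv_eq_of_desc hc (Dv_desc T root v) (desc_refl _)

lemma Dv_lam_fiber (hc : T.Connected) {v w : V} (h : Dv T root v = w) :
    lamMax T root v = T.dist root w := by
  rw [← h, Dv_lam]

/-- fiber of the canonical-deepest-descendant map is a full vertical path -/
lemma fiber_image (hT : T.IsTree) (w : V) (hw : Dv T root w = w) :
    ∃ b : ℕ, 1 ≤ b ∧ b ≤ T.dist root w + 1 ∧ (1 ≤ T.dist root w → b ≤ T.dist root w) ∧
      ((Finset.univ.filter fun v => v ≠ root ∧ Dv T root v = w).image
        (fun v => T.dist root v)) = Finset.Icc b (T.dist root w) ∧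
      ((Finset.univ.filter fun v => v ≠ root ∧ 2 * T.dist root v ≤ lamMax T root v ∧
          Dv T root v = w).image (fun v => T.dist root v))
        = Finset.Icc b (T.dist root w / 2) := by
  classical
  have hc := hT.isConnected
  set m := T.dist root w with hm
  -- basic facts about fiber members
  have hfib : ∀ v, Dv T root v = w →
      Desc T root v w ∧ T.dist root v ≤ m ∧ lamMax T root v = m := by
    intro v hv
    have hd : Desc T root v w := by rw [← hv]; exact Dv_desc T root v
    have hlm : lamMax T root v = m := by rw [← Dv_lam T root v, hv]
    exact ⟨hd, by have := desc_level_le hc hd; omega, hlm⟩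
  set S : Set ℕ := {k | ∃ v, Dv T root v = w ∧ T.dist root v = k} with hS
  have hSne : S.Nonempty := ⟨m, w, hw, rfl⟩
  set a := sInf S with ha
  obtain ⟨v0, hv0w, hv0lam⟩ : ∃ v, Dv T root v = w ∧ T.dist root v = a := Nat.sInf_mem hSne
  have ham : a ≤ m := by rw [← hv0lam]; exact (hfib v0 hv0w).2.1
  set b := max a 1 with hb
  -- interval property
  have hint : ∀ k, a ≤ k → k ≤ m → ∃ v, Dv T root v = w ∧ T.dist root v = k := by
    intro k hak hkm
    obtain ⟨u, hu1, hu2⟩ := exists_ancestor hc (root := root) (w := w) hkm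
    have hv0u : Desc T root v0 u :=
      desc_of_desc_desc hT (hfib v0 hv0w).1 hu1 (by omega)
    have : Dv T root u = Dv T root v0 := by
      apply Dv_eq_of_desc hc hv0u
      rw [hv0w]; exact hu1
    exact ⟨u, by rw [this, hv0w], hu2⟩
  have hbb : b = max a 1 := rfl
  refine ⟨b, le_max_right a 1, ?_, ?_, ?_, ?_⟩
  · rw [hbb]; exact Nat.max_le.2 ⟨by omega, by omega⟩
  · intro hm1; rw [hbb]; exact Nat.max_le.2 ⟨ham, hm1⟩
  · ext k
    simp only [Finset.mem_image, Finset.mem_filter, Finset.mem_univ, true_and,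
      Finset.mem_Icc]
    constructor
    · rintro ⟨v, ⟨hvr, hvw⟩, rfl⟩
      have h1 : 1 ≤ T.dist root v := by
        rcases Nat.eq_zero_or_pos (T.dist root v) with h | h
        · exact absurd ((lam_eq_zero_iff hc).1 h) hvr
        · omega
      have h2 : a ≤ T.dist root v := Nat.sInf_le ⟨v, hvw, rfl⟩
      exact ⟨by omega, (hfib v hvw).2.1⟩
    · rintro ⟨hbk, hkm⟩
      obtain ⟨v, hvw, hvlam⟩ := hint k (by omega) hkm
      refine ⟨v, ⟨?_, hvw⟩, hvlam⟩
      intro hvr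
      rw [hvr] at hvlam
      rw [SimpleGraph.dist_self] at hvlam
      omega
  · ext k
    simp only [Finset.mem_image, Finset.mem_filter, Finset.mem_univ, true_and,
      Finset.mem_Icc]
    constructor
    · rintro ⟨v, ⟨hvr, hvA, hvw⟩, rfl⟩
      have h1 : 1 ≤ T.dist root v := by
        rcases Nat.eq_zero_or_pos (T.dist root v) with h | h
        · exact absurd ((lam_eq_zero_iff hc).1 h) hvr
        · omega
      have h2 : a ≤ T.dist root v := Nat.sInf_le ⟨v, hvw, rfl⟩
      have h3 : lamMax T root v = m := (hfib v hvw).2.2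
      rw [h3] at hvA
      exact ⟨by omega, by omega⟩
    · rintro ⟨hbk, hkm⟩
      obtain ⟨v, hvw, hvlam⟩ := hint k (by omega) (by omega)
      have h3 : lamMax T root v = m := (hfib v hvw).2.2
      refine ⟨v, ⟨?_, by omega, hvw⟩, hvlam⟩
      intro hvr
      rw [hvr] at hvlam
      rw [SimpleGraph.dist_self] at hvlam
      omega

/-- injectivity of the level map on each fiber -/
lemma fiber_injOn (hT : T.IsTree) (w : V) :
    Set.InjOn (fun v => T.dist root v)
      ↑(Finset.univ.filter fun v : V => v ≠ root ∧ Dv T root v = w) := by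
  intro x hx y hy hxy
  simp only [Finset.coe_filter, Set.mem_setOf_eq, Finset.mem_univ, true_and] at hx hy
  have hxw : Desc T root x w := by rw [← hx.2]; exact Dv_desc T root x
  have hyw : Desc T root y w := by rw [← hy.2]; exact Dv_desc T root y
  exact ancestor_unique hT hxw hyw hxy

end FT

end Stmt5Aux

/-- if `e(T) = 2 e(⌊T/2⌋)` then `T` is an even spider: every
non-root vertex has degree at most 2 and every leg has even length. -/

theorem stmt_5 {V : Type*} [Fintype V] (T : SimpleGraph V) (hT : T.IsTree) (root : V)
    (heq : T.edgeSet.ncard = 2 * edgesIn T (halfFloor T root)) :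
    (∀ v, v ≠ root → degOf T v ≤ 2) ∧
      (∀ v, IsRootLeaf T root v → Even (T.dist root v)) := by
  classical
  have hc := hT.isConnected
  have lam_pos : ∀ v : V, v ≠ root → 1 ≤ T.dist root v := by
    intro v hv
    rcases Nat.eq_zero_or_pos (T.dist root v) with h | h
    · exact absurd ((Stmt5Aux.lam_eq_zero_iff hc).1 h) hv
    · exact h
  -- the parent function
  have parent_ex : ∀ v : V, ∃ u, Desc T root u v ∧ T.dist root u = T.dist root v - 1 :=
    fun v => Stmt5Aux.exists_ancestor hc (Nat.sub_le _ _)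
  set par : V → V := fun v => Classical.choose (parent_ex v) with hpar
  have parD : ∀ v, Desc T root (par v) v := fun v => (Classical.choose_spec (parent_ex v)).1
  have parL : ∀ v, T.dist root (par v) = T.dist root v - 1 :=
    fun v => (Classical.choose_spec (parent_ex v)).2
  have parAdj : ∀ v, v ≠ root → T.Adj (par v) v := by
    intro v hv
    refine Stmt5Aux.adj_of_desc_succ hc (parD v) ?_
    have := parL v; have := lam_pos v hv; omega
  set N : Finset V := Finset.univ.filter (fun v => v ≠ root) with hN
  set A : Finset V := Finset.univ.filter
    (fun v => v ≠ root ∧ 2 * T.dist root v ≤ lamMax T root v) with hA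
  set g : V → Sym2 V := fun v => s(par v, v) with hg
  have childOf : ∀ ⦃x y : V⦄, T.Adj x y → T.dist root y = T.dist root x + 1 →
      (y ≠ root ∧ par y = x) := by
    intro x y hxy hl
    have hyr : y ≠ root := by
      intro h; rw [h, SimpleGraph.dist_self] at hl; omega
    refine ⟨hyr, ?_⟩
    have hdxy : Desc T root x y := by
      unfold Desc
      have : T.dist x y = 1 := SimpleGraph.dist_eq_one_iff_adj.2 hxy
      omega
    exact Stmt5Aux.ancestor_unique hT (parD y) hdxy (by rw [parL y]; omega)
  -- each edge has a canonical child
  have edge_child : ∀ e ∈ T.edgeSet, ∃ v, v ≠ root ∧ g v = e ∧ v ∈ e := by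
    intro e
    induction e using Sym2.ind with
    | _ x y =>
      intro he
      have hxy : T.Adj x y := T.mem_edgeSet.1 he
      rcases Stmt5Aux.adj_parent hT (root := root) hxy with ⟨h1, h2⟩ | ⟨h1, h2⟩
      · obtain ⟨hyr, hpy⟩ := childOf hxy (by omega)
        refine ⟨y, hyr, ?_, ?_⟩
        · rw [hg]; simp only; rw [hpy]
        · exact Sym2.mem_mk_right x y
      · obtain ⟨hxr, hpx⟩ := childOf hxy.symm (by omega)
        refine ⟨x, hxr, ?_, ?_⟩
        · rw [hg]; simp only; rw [hpx]; exact Sym2.eq_swap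
        · exact Sym2.mem_mk_left x y
  have hEdgeSet : T.edgeSet = g '' ↑N := by
    ext e
    constructor
    · intro he
      obtain ⟨v, hv, hgv, -⟩ := edge_child e he
      exact ⟨v, by simp [hN, hv], hgv⟩
    · rintro ⟨v, hv, rfl⟩
      simp only [hN, Finset.coe_filter, Set.mem_setOf_eq, Finset.mem_univ, true_and] at hv
      exact T.mem_edgeSet.2 (parAdj v hv)
  have hInj : Set.InjOn g ↑N := by
    intro x hx y hy hxy
    simp only [hN, Finset.coe_filter, Set.mem_setOf_eq, Finset.mem_univ, true_and] at hx hy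
    rw [hg] at hxy
    simp only [Sym2.eq, Sym2.rel_iff', Prod.mk.injEq, Prod.swap_prod_mk] at hxy
    rcases hxy with ⟨-, h⟩ | ⟨h1, h2⟩
    · exact h
    · exfalso
      have e1 := parL x
      have e2 := parL y
      have e3 := lam_pos x hx
      have e4 := lam_pos y hy
      rw [h1] at e1
      rw [← h2] at e2
      omega
  have hE1 : T.edgeSet.ncard = N.card := by
    rw [hEdgeSet, Set.ncard_image_of_injOn hInj, Set.ncard_coe_finset]
  have hhf : ∀ x : V, x ∈ halfFloor T root ↔ 2 * T.dist root x ≤ lamMax T root x := by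
    intro x
    have : x ∈ halfFloor T root ↔ T.dist root x ≤ lamMax T root x / 2 := Iff.rfl
    rw [this]; omega
  have hEdgeSet2 : {e ∈ T.edgeSet | ∀ x ∈ e, x ∈ halfFloor T root} = g '' ↑A := by
    ext e
    constructor
    · rintro ⟨he, hmem⟩
      obtain ⟨v, hvr, hgv, hve⟩ := edge_child e he
      refine ⟨v, ?_, hgv⟩
      have hvh := (hhf v).1 (hmem v hve)
      simp only [hA, Finset.coe_filter, Set.mem_setOf_eq, Finset.mem_univ, true_and]
      exact ⟨hvr, hvh⟩
    · rintro ⟨v, hv, rfl⟩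
      simp only [hA, Finset.coe_filter, Set.mem_setOf_eq, Finset.mem_univ, true_and] at hv
      obtain ⟨hvr, hvA⟩ := hv
      refine ⟨T.mem_edgeSet.2 (parAdj v hvr), ?_⟩
      intro x hx
      rw [hg] at hx
      simp only at hx
      rcases Sym2.mem_iff.1 hx with rfl | rfl
      · rw [hhf]
        have e1 := parL v
        have e2 : lamMax T root v ≤ lamMax T root (par v) :=
          Stmt5Aux.lamMax_le_of_desc hc (parD v)
        have e3 := lam_pos v hvr
        omega
      · exact (hhf x).2 hvA
  have hAsubN : (↑A : Set V) ⊆ ↑N := by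
    intro x hx
    simp only [hA, hN, Finset.coe_filter, Set.mem_setOf_eq, Finset.mem_univ, true_and] at hx ⊢
    exact hx.1
  have hInjA : Set.InjOn g ↑A := hInj.mono hAsubN
  have hE2 : edgesIn T (halfFloor T root) = A.card := by
    show ({e ∈ T.edgeSet | ∀ x ∈ e, x ∈ halfFloor T root}).ncard = A.card
    rw [hEdgeSet2, Set.ncard_image_of_injOn hInjA, Set.ncard_coe_finset]
  have hcard : N.card = 2 * A.card := by
    rw [← hE1, heq, hE2]
  -- fiberwise counting via the canonical deepest descendant
  set D : V → V := fun v => Stmt5Aux.Dv T root v with hD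
  have hsumN : N.card = ∑ w ∈ Finset.univ, (N.filter fun v => D v = w).card :=
    Finset.card_eq_sum_card_fiberwise (fun x _ => Finset.mem_univ (D x))
  have hsumA : A.card = ∑ w ∈ Finset.univ, (A.filter fun v => D v = w).card :=
    Finset.card_eq_sum_card_fiberwise (fun x _ => Finset.mem_univ (D x))
  have hfibl : ∀ w : V,
      2 * (A.filter fun v => D v = w).card ≤ (N.filter fun v => D v = w).card ∧
      ((2 * (A.filter fun v => D v = w).card = (N.filter fun v => D v = w).card ∧
          Stmt5Aux.Dv T root w = w ∧ 1 ≤ T.dist root w) →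
        (T.dist root w % 2 = 0 ∧
          ∀ k, 1 ≤ k → k ≤ T.dist root w →
            ∃ v, v ≠ root ∧ D v = w ∧ T.dist root v = k)) := by
    intro w
    by_cases hw : Stmt5Aux.Dv T root w = w
    · obtain ⟨b, hb1, hb2, hb3, hNim, hAim⟩ := Stmt5Aux.fiber_image hT w hw
      have hNfid : N.filter (fun v => D v = w) =
          Finset.univ.filter fun v => v ≠ root ∧ Stmt5Aux.Dv T root v = w := by
        ext v
        simp only [hN, hD, Finset.mem_filter, Finset.mem_univ, true_and] <;> tauto
      have hAfid : A.filter (fun v => D v = w) =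
          Finset.univ.filter fun v => v ≠ root ∧ 2 * T.dist root v ≤ lamMax T root v ∧
            Stmt5Aux.Dv T root v = w := by
        ext v
        simp only [hA, hD, Finset.mem_filter, Finset.mem_univ, true_and] <;> tauto
      have hsubAN : (Finset.univ.filter fun v => v ≠ root ∧ 2 * T.dist root v ≤ lamMax T root v ∧
            Stmt5Aux.Dv T root v = w) ⊆
          (Finset.univ.filter fun v : V => v ≠ root ∧ Stmt5Aux.Dv T root v = w) := by
        intro x hx
        simp only [Finset.mem_filter, Finset.mem_univ, true_and] at hx ⊢
        tauto
      have hcN : (N.filter fun v => D v = w).card = T.dist root w + 1 - b := by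
        rw [hNfid, ← Finset.card_image_of_injOn (Stmt5Aux.fiber_injOn hT w), hNim, Nat.card_Icc]
      have hcA : (A.filter fun v => D v = w).card = T.dist root w / 2 + 1 - b := by
        rw [hAfid, ← Finset.card_image_of_injOn
          ((Stmt5Aux.fiber_injOn hT w).mono (by exact_mod_cast hsubAN)), hAim, Nat.card_Icc]
      constructor
      · rw [hcN, hcA]; omega
      · rintro ⟨hEq, -, hm1⟩
        have hbm := hb3 hm1
        rw [hcN, hcA] at hEq
        have hbeq : b = 1 ∧ T.dist root w % 2 = 0 := by omega
        refine ⟨hbeq.2, ?_⟩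
        intro k hk1 hkm
        have hkmem : k ∈ Finset.Icc b (T.dist root w) := by rw [Finset.mem_Icc]; omega
        rw [← hNim] at hkmem
        obtain ⟨v, hv, hvk⟩ := Finset.mem_image.1 hkmem
        simp only [Finset.mem_filter, Finset.mem_univ, true_and] at hv
        exact ⟨v, hv.1, hv.2, hvk⟩
    · have hNempty : (N.filter fun v => D v = w) = ∅ := by
        rw [Finset.eq_empty_iff_forall_notMem]
        intro v hv
        simp only [hN, hD, Finset.mem_filter, Finset.mem_univ, true_and] at hv
        apply hw
        rw [← hv.2]
        exact Stmt5Aux.Dv_idem hc v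
      have hAempty : (A.filter fun v => D v = w) = ∅ := by
        rw [Finset.eq_empty_iff_forall_notMem]
        intro v hv
        simp only [hA, hD, Finset.mem_filter, Finset.mem_univ, true_and] at hv
        apply hw
        rw [← hv.2]
        exact Stmt5Aux.Dv_idem hc v
      refine ⟨by simp [hNempty, hAempty], fun h => absurd h.2.1 hw⟩
  have hEqAll : ∀ w ∈ (Finset.univ : Finset V),
      2 * (A.filter fun v => D v = w).card = (N.filter fun v => D v = w).card := by
    apply (Finset.sum_eq_sum_iff_of_le (fun w _ => (hfibl w).1)).1
    rw [← Finset.mul_sum, ← hsumA, ← hsumN, hcard]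
  have hKey : ∀ w, Stmt5Aux.Dv T root w = w → 1 ≤ T.dist root w →
      (T.dist root w % 2 = 0 ∧
        ∀ k, 1 ≤ k → k ≤ T.dist root w →
          ∃ v, v ≠ root ∧ D v = w ∧ T.dist root v = k) :=
    fun w hw hm => (hfibl w).2 ⟨hEqAll w (Finset.mem_univ w), hw, hm⟩
  constructor
  · -- degrees
    intro v hvr
    have hup : ∀ c, T.Adj v c → T.dist root v < T.dist root c →
        (Desc T root v c ∧ T.dist root c = T.dist root v + 1 ∧
          Stmt5Aux.Dv T root v = Stmt5Aux.Dv T root c) := by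
      intro c hadj hlt
      rcases Stmt5Aux.adj_parent hT (root := root) hadj with ⟨h1, h2⟩ | ⟨h1, h2⟩
      · set w := Stmt5Aux.Dv T root c with hwdef
        have hw : Stmt5Aux.Dv T root w = w := Stmt5Aux.Dv_idem hc c
        have hlamw : T.dist root w = lamMax T root c := Stmt5Aux.Dv_lam T root c
        have hcw : Desc T root c w := Stmt5Aux.Dv_desc T root c
        have hclam : T.dist root c ≤ T.dist root w := by
          rw [hlamw]; exact Stmt5Aux.lam_le_lamMax T root c
        have hm1 : 1 ≤ T.dist root w := by have := lam_pos v hvr; omega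
        obtain ⟨-, hex⟩ := hKey w hw hm1
        obtain ⟨x, hxr, hxw, hxlam⟩ := hex (T.dist root v) (lam_pos v hvr) (by omega)
        have hxdesc : Desc T root x w := by
          rw [← hxw]; exact Stmt5Aux.Dv_desc T root x
        have hvdesc : Desc T root v w := Stmt5Aux.desc_trans hc h2 hcw
        have hxv : x = v := Stmt5Aux.ancestor_unique hT hxdesc hvdesc hxlam
        rw [hxv] at hxw
        exact ⟨h2, by omega, hxw⟩
      · exfalso; omega
    have hchild_uniq : ∀ c1 c2, T.Adj v c1 → T.Adj v c2 →
        T.dist root v < T.dist root c1 → T.dist root v < T.dist root c2 → c1 = c2 := by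
      intro c1 c2 ha1 ha2 hl1 hl2
      obtain ⟨hd1, hll1, hD1⟩ := hup c1 ha1 hl1
      obtain ⟨hd2, hll2, hD2⟩ := hup c2 ha2 hl2
      have hDD : Stmt5Aux.Dv T root c1 = Stmt5Aux.Dv T root c2 := by rw [← hD1, hD2]
      have hdc1 : Desc T root c1 (Stmt5Aux.Dv T root c1) := Stmt5Aux.Dv_desc T root c1
      have hdc2 : Desc T root c2 (Stmt5Aux.Dv T root c1) := by
        rw [hDD]; exact Stmt5Aux.Dv_desc T root c2
      exact Stmt5Aux.ancestor_unique hT hdc1 hdc2 (by omega)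
    have hpar_uniq : ∀ p1 p2, T.Adj v p1 → T.Adj v p2 →
        T.dist root p1 < T.dist root v → T.dist root p2 < T.dist root v → p1 = p2 := by
      intro p1 p2 ha1 ha2 hl1 hl2
      have hD1 : Desc T root p1 v ∧ T.dist root p1 + 1 = T.dist root v := by
        rcases Stmt5Aux.adj_parent hT (root := root) ha1 with ⟨h1, h2⟩ | ⟨h1, h2⟩
        · exfalso; omega
        · exact ⟨h2, h1⟩
      have hD2 : Desc T root p2 v ∧ T.dist root p2 + 1 = T.dist root v := by
        rcases Stmt5Aux.adj_parent hT (root := root) ha2 with ⟨h1, h2⟩ | ⟨h1, h2⟩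
        · exfalso; omega
        · exact ⟨h2, h1⟩
      exact Stmt5Aux.ancestor_unique hT hD1.1 hD2.1 (by omega)
    have hsub : T.neighborSet v =
        {u | T.Adj v u ∧ T.dist root u < T.dist root v} ∪
          {u | T.Adj v u ∧ T.dist root v < T.dist root u} := by
      ext u
      simp only [SimpleGraph.mem_neighborSet, Set.mem_union, Set.mem_setOf_eq]
      constructor
      · intro h
        rcases Stmt5Aux.adj_parent hT (root := root) h with ⟨h1, -⟩ | ⟨h1, -⟩
        · right; exact ⟨h, by omega⟩
        · left; exact ⟨h, by omega⟩
      · rintro (⟨h, -⟩ | ⟨h, -⟩) <;> exact h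
    show (T.neighborSet v).ncard ≤ 2
    rw [hsub]
    refine le_trans (Set.ncard_union_le _ _) ?_
    have h1 : {u | T.Adj v u ∧ T.dist root u < T.dist root v}.ncard ≤ 1 := by
      rw [Set.ncard_le_one (Set.toFinite _)]
      rintro a ⟨ha1, ha2⟩ b ⟨hb1, hb2⟩
      exact hpar_uniq a b ha1 hb1 ha2 hb2
    have h2 : {u | T.Adj v u ∧ T.dist root v < T.dist root u}.ncard ≤ 1 := by
      rw [Set.ncard_le_one (Set.toFinite _)]
      rintro a ⟨ha1, ha2⟩ b ⟨hb1, hb2⟩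
      exact hchild_uniq a b ha1 hb1 ha2 hb2
    omega
  · -- leaves
    rintro v ⟨hvr, hdesc⟩
    have hDv : Stmt5Aux.Dv T root v = v := hdesc _ (Stmt5Aux.Dv_desc T root v)
    exact Nat.even_iff.2 (hKey v hDv (lam_pos v hvr)).1
end
end

section
/- Let $T$ be a finite rooted tree with $e(T) = 2\,e(\lfloor T/2 \rfloor) + 1$. Then either $\lfloor T/2 \rfloor = \lceil T/2 \rceil$, or $T$ is a spider with exactly one leg of odd length. -/
open Classical

noncomputable section

set_option linter.unusedSectionVars false

open SimpleGraph

namespace Stmt6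

variable {V : Type*} {T : SimpleGraph V} {root : V}

lemma dist_tri (hc : T.Connected) (u v w : V) :
    T.dist u w ≤ T.dist u v + T.dist v w := hc.dist_triangle

lemma exists_path_length_dist (hc : T.Connected) (u v : V) :
    ∃ p : T.Walk u v, p.IsPath ∧ p.length = T.dist u v := by
  obtain ⟨p, hp⟩ := hc.exists_walk_length_eq_dist u v
  refine ⟨p.bypass, p.bypass_isPath, le_antisymm ?_ (SimpleGraph.dist_le _)⟩
  exact hp ▸ p.length_bypass_le

lemma isPath_of_length_dist (hc : T.Connected) :
    ∀ {u v : V} (p : T.Walk u v), p.length = T.dist u v → p.IsPath := by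
  intro u v p
  induction p with
  | nil => intro _; exact SimpleGraph.Walk.IsPath.nil
  | @cons u x v h q ih =>
    intro hl
    simp only [SimpleGraph.Walk.length_cons] at hl
    have hxv : T.dist x v = q.length := by
      have h1 : T.dist x v ≤ q.length := SimpleGraph.dist_le q
      have h2 : T.dist u v ≤ T.dist u x + T.dist x v := hc.dist_triangle
      have h3 : T.dist u x ≤ 1 := by
        simpa using SimpleGraph.dist_le (SimpleGraph.Walk.cons h SimpleGraph.Walk.nil)
      omega
    have hq := ih hxv.symm
    rw [SimpleGraph.Walk.cons_isPath_iff]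
    refine ⟨hq, fun hu => ?_⟩
    have := SimpleGraph.dist_le (q.dropUntil u hu)
    have := q.length_dropUntil_le hu
    -- dist u v ≤ length of dropUntil ≤ q.length, but dist u v = q.length + 1
    omega

lemma path_length_eq_dist (hT : T.IsTree) {u v : V} (p : T.Walk u v) (hp : p.IsPath) :
    p.length = T.dist u v := by
  obtain ⟨q, hq, hql⟩ := exists_path_length_dist hT.isConnected u v
  have : (⟨p, hp⟩ : T.Path u v) = ⟨q, hq⟩ := hT.IsAcyclic.path_unique _ _
  rw [show p = q from congrArg Subtype.val this, hql]

lemma path_unique' (hT : T.IsTree) {u v : V} (p q : T.Walk u v) (hp : p.IsPath)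
    (hq : q.IsPath) : p = q :=
  congrArg Subtype.val (hT.IsAcyclic.path_unique (⟨p, hp⟩ : T.Path u v) ⟨q, hq⟩)

/-- on a path (in a tree), takeUntil length is dist, and the vertex at index dist u x is x -/
lemma takeUntil_length_eq (hT : T.IsTree) {u v x : V} (p : T.Walk u v) (hp : p.IsPath)
    (hx : x ∈ p.support) : (p.takeUntil x hx).length = T.dist u x :=
  path_length_eq_dist hT _ (hp.takeUntil hx)

lemma getVert_dist (hT : T.IsTree) {u v x : V} (p : T.Walk u v) (hp : p.IsPath)
    (hx : x ∈ p.support) : p.getVert (T.dist u x) = x := by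
  have hsp := p.take_spec hx
  have hl := takeUntil_length_eq hT p hp hx
  have := SimpleGraph.Walk.getVert_append (p.takeUntil x hx) (p.dropUntil x hx) (T.dist u x)
  rw [hsp] at this
  rw [this]
  simp [hl, SimpleGraph.Walk.getVert_length]

end Stmt6

namespace Stmt6
variable {V : Type*} {T : SimpleGraph V} {root : V}

section withFin
variable [Fintype V]

lemma desc_self (v : V) : Desc T root v v := by
  simp [Desc, SimpleGraph.dist_self]

lemma desc_root (v : V) : Desc T root root v := by
  simp [Desc, SimpleGraph.dist_self]

lemma desc_level_le {v w : V} (h : Desc T root v w) :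
    T.dist root v ≤ T.dist root w := by
  unfold Desc at h; omega

lemma desc_trans (hc : T.Connected) {u v w : V} (h1 : Desc T root u v)
    (h2 : Desc T root v w) : Desc T root u w := by
  unfold Desc at *
  have t1 := hc.dist_triangle (u := u) (v := v) (w := w)
  have t2 := hc.dist_triangle (u := root) (v := u) (w := w)
  omega

lemma desc_antisymm (hc : T.Connected) {v w : V} (h1 : Desc T root v w)
    (h2 : Desc T root w v) : v = w := by
  unfold Desc at *
  have : T.dist v w = 0 := by omega
  exact ((hc v w).dist_eq_zero_iff).mp this

lemma dist_pos_of_ne (hc : T.Connected) {v w : V} (h : v ≠ w) : 0 < T.dist v w := by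
  rcases Nat.eq_zero_or_pos (T.dist v w) with h0 | h0
  · exact absurd (((hc v w).dist_eq_zero_iff).mp h0) h
  · exact h0

lemma adj_dist_cases (hT : T.IsTree) {u v : V} (h : T.Adj u v) :
    T.dist root v = T.dist root u + 1 ∨ T.dist root u = T.dist root v + 1 := by
  have hc := hT.isConnected
  have huv : T.dist u v = 1 := by
    have h1 : T.dist u v ≤ 1 := by
      simpa using SimpleGraph.dist_le (SimpleGraph.Walk.cons h SimpleGraph.Walk.nil)
    have h2 : 0 < T.dist u v := dist_pos_of_ne hc h.ne
    omega
  have t1 : T.dist root v ≤ T.dist root u + 1 := by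
    have := hc.dist_triangle (u := root) (v := u) (w := v); omega
  have t2 : T.dist root u ≤ T.dist root v + 1 := by
    have := hc.dist_triangle (u := root) (v := v) (w := u)
    have := (SimpleGraph.dist_comm (G := T) (u := v) (v := u))
    omega
  have hne : T.dist root u ≠ T.dist root v := by
    intro heqd
    obtain ⟨p, hp, hpl⟩ := exists_path_length_dist hc root u
    by_cases hv : v ∈ p.support
    · have ht := takeUntil_length_eq hT p hp hv
      have hsp := congrArg SimpleGraph.Walk.length (p.take_spec hv)
      rw [SimpleGraph.Walk.length_append] at hsp
      have hd0 : (p.dropUntil v hv).length = 0 := by omega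
      have : v = u := by
        have := (SimpleGraph.Walk.nil_iff_length_eq).mpr hd0
        exact this.eq
      exact h.ne this.symm
    · have hq : (p.concat h).IsPath := by
        rw [SimpleGraph.Walk.isPath_def, SimpleGraph.Walk.support_concat]
        simp only [List.concat_eq_append, List.nodup_append]
        refine ⟨hp.support_nodup, List.nodup_singleton _, ?_⟩
        intro a ha b hb hab
        simp only [List.mem_singleton] at hb
        subst hb
        exact hv (hab ▸ ha)
      have := path_length_eq_dist hT _ hq
      rw [SimpleGraph.Walk.length_concat] at this
      omega
  omega

end withFin
end Stmt6



namespace Stmt6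
variable {V : Type*} {T : SimpleGraph V} {root : V}
section chunk3
variable [Fintype V]

lemma dist_adj (hc : T.Connected) {u v : V} (h : T.Adj u v) : T.dist u v = 1 := by
  have h1 : T.dist u v ≤ 1 := by
    simpa using SimpleGraph.dist_le (SimpleGraph.Walk.cons h SimpleGraph.Walk.nil)
  have h2 : 0 < T.dist u v := dist_pos_of_ne hc h.ne
  omega

lemma getVert_dist_le (hc : T.Connected) :
    ∀ {u v : V} (p : T.Walk u v) (i : ℕ), T.dist u (p.getVert i) ≤ i := by
  intro u v p
  induction p with
  | nil => intro i; simp [SimpleGraph.Walk.getVert, SimpleGraph.dist_self]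
  | @cons u x v h q ih =>
    intro i
    cases i with
    | zero => simp [SimpleGraph.Walk.getVert_zero, SimpleGraph.dist_self]
    | succ i =>
      rw [SimpleGraph.Walk.getVert_cons_succ]
      have t := hc.dist_triangle (u := u) (v := x) (w := q.getVert i)
      have := ih i
      have := dist_adj hc h
      omega

lemma getVert_dist_le' (hc : T.Connected) :
    ∀ {u v : V} (p : T.Walk u v) (i : ℕ), T.dist (p.getVert i) v ≤ p.length - i := by
  intro u v p
  induction p with
  | nil => intro i; simp [SimpleGraph.Walk.getVert, SimpleGraph.dist_self]
  | @cons u x v h q ih =>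
    intro i
    cases i with
    | zero =>
      rw [SimpleGraph.Walk.getVert_zero]
      have := SimpleGraph.dist_le (SimpleGraph.Walk.cons h q)
      omega
    | succ i =>
      rw [SimpleGraph.Walk.getVert_cons_succ]
      have := ih i
      simp only [SimpleGraph.Walk.length_cons]
      omega

/-- existence of an intermediate vertex at each level -/
lemma desc_mid (hc : T.Connected) {v w : V} (h : Desc T root v w) (t : ℕ)
    (h1 : T.dist root v ≤ t) (h2 : t ≤ T.dist root w) :
    ∃ u, Desc T root v u ∧ Desc T root u w ∧ T.dist root u = t := by
  obtain ⟨p, hp, hpl⟩ := exists_path_length_dist hc v w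
  have d1 := getVert_dist_le hc p (t - T.dist root v)
  have d2 := getVert_dist_le' hc p (t - T.dist root v)
  rw [hpl] at d2
  unfold Desc at h ⊢
  have t0 := hc.dist_triangle (u := v) (v := p.getVert (t - T.dist root v)) (w := w)
  have t1 := hc.dist_triangle (u := root) (v := v) (w := p.getVert (t - T.dist root v))
  have t2 := hc.dist_triangle (u := root) (v := p.getVert (t - T.dist root v)) (w := w)
  exact ⟨p.getVert (t - T.dist root v), by omega, by omega, by omega⟩

lemma desc_mem_support (hT : T.IsTree) {v w : V} (h : Desc T root v w)
    (p : T.Walk root w) (hp : p.IsPath) : v ∈ p.support := by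
  have hc := hT.isConnected
  obtain ⟨p1, hp1, hl1⟩ := exists_path_length_dist hc root v
  obtain ⟨p2, hp2, hl2⟩ := exists_path_length_dist hc v w
  have hW : (p1.append p2).IsPath := by
    apply isPath_of_length_dist hc
    rw [SimpleGraph.Walk.length_append, hl1, hl2]
    exact h
  have := path_unique' hT _ _ hW hp
  rw [← this]
  rw [SimpleGraph.Walk.mem_support_append_iff]
  exact Or.inl (SimpleGraph.Walk.end_mem_support p1)

/-- uniqueness of the ancestor at a given level -/
lemma anc_unique (hT : T.IsTree) {v v' w : V} (h : Desc T root v w)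
    (h' : Desc T root v' w) (hd : T.dist root v = T.dist root v') : v = v' := by
  obtain ⟨p, hp, hpl⟩ := exists_path_length_dist hT.isConnected root w
  have m1 := desc_mem_support hT h p hp
  have m2 := desc_mem_support hT h' p hp
  have e1 := getVert_dist hT p hp m1
  have e2 := getVert_dist hT p hp m2
  rw [← hd] at e2
  exact e1.symm.trans e2

lemma adj_desc (hc : T.Connected) {v c : V} (h : T.Adj v c)
    (hd : T.dist root c = T.dist root v + 1) : Desc T root v c := by
  unfold Desc
  rw [dist_adj hc h]
  omega

/-- existence and uniqueness of the parent -/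
lemma exists_parent (hT : T.IsTree) {v : V} (hv : v ≠ root) :
    ∃ u, T.Adj u v ∧ T.dist root u + 1 = T.dist root v := by
  have hc := hT.isConnected
  obtain ⟨p, hp, hpl⟩ := exists_path_length_dist hc root v
  have hlen : 0 < p.length := by
    rw [hpl]; exact dist_pos_of_ne hc (Ne.symm hv)
  refine ⟨p.getVert (p.length - 1), ?_, ?_⟩
  · have := p.adj_getVert_succ (i := p.length - 1) (by omega)
    rw [show p.length - 1 + 1 = p.length by omega, SimpleGraph.Walk.getVert_length] at this
    exact this
  · have h1 : T.dist root (p.getVert (p.length - 1)) ≤ p.length - 1 :=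
      getVert_dist_le hc p _
    have h2 : T.dist root v ≤ T.dist root (p.getVert (p.length - 1)) + 1 := by
      have := hc.dist_triangle (u := root) (v := p.getVert (p.length - 1)) (w := v)
      have hadj : T.Adj (p.getVert (p.length - 1)) v := by
        have := p.adj_getVert_succ (i := p.length - 1) (by omega)
        rwa [show p.length - 1 + 1 = p.length by omega, SimpleGraph.Walk.getVert_length] at this
      have := dist_adj hc hadj
      omega
    omega

lemma parent_unique (hT : T.IsTree) {v p1 p2 : V}
    (h1 : T.Adj p1 v) (hd1 : T.dist root p1 + 1 = T.dist root v)
    (h2 : T.Adj p2 v) (hd2 : T.dist root p2 + 1 = T.dist root v) : p1 = p2 := by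
  have hc := hT.isConnected
  have e1 : Desc T root p1 v := adj_desc hc h1 (by omega)
  have e2 : Desc T root p2 v := adj_desc hc h2 (by omega)
  exact anc_unique hT e1 e2 (by omega)

end chunk3
end Stmt6


namespace Stmt6
section chunk4
variable {V : Type*} [Fintype V] (T : SimpleGraph V) (root : V)

/-- descendants of `v` as a finset -/
def descFinset (v : V) : Finset V := Finset.univ.filter (fun w => Desc T root v w)

/-- an injective key: level first, tie-broken by an arbitrary equiv with Fin -/
def keyF (w : V) : ℕ := (Fintype.equivFin V w).val + T.dist root w * Fintype.card V

variable {T root}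

lemma keyF_inj {w w' : V} (h : keyF T root w = keyF T root w') : w = w' := by
  unfold keyF at h
  have h1 : ((Fintype.equivFin V) w).val < Fintype.card V := (Fintype.equivFin V w).isLt
  have h2 : ((Fintype.equivFin V) w').val < Fintype.card V := (Fintype.equivFin V w').isLt
  have hd : T.dist root w = T.dist root w' := by
    rcases Nat.lt_trichotomy (T.dist root w) (T.dist root w') with hl | hl | hl
    · nlinarith
    · exact hl
    · nlinarith
  rw [hd] at h
  have : (Fintype.equivFin V w) = (Fintype.equivFin V w') := Fin.ext (by omega)
  exact (Fintype.equivFin V).injective this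

lemma level_le_of_keyF_le {w w' : V} (h : keyF T root w ≤ keyF T root w') :
    T.dist root w ≤ T.dist root w' := by
  unfold keyF at h
  have h1 : ((Fintype.equivFin V) w).val < Fintype.card V := (Fintype.equivFin V w).isLt
  have h2 : ((Fintype.equivFin V) w').val < Fintype.card V := (Fintype.equivFin V w').isLt
  by_contra hc
  push_neg at hc
  nlinarith

lemma self_mem_descFinset (v : V) : v ∈ descFinset T root v := by
  simp [descFinset, desc_self]

variable (T root) in
/-- the canonical deepest descendant -/
def Dv (v : V) : V :=
  Classical.choose ((descFinset T root v).exists_mem_eq_sup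
    ⟨v, self_mem_descFinset v⟩ (keyF T root))

lemma Dv_spec (v : V) : Dv T root v ∈ descFinset T root v ∧
    (descFinset T root v).sup (keyF T root) = keyF T root (Dv T root v) := by
  have := Classical.choose_spec ((descFinset T root v).exists_mem_eq_sup
    ⟨v, self_mem_descFinset v⟩ (keyF T root))
  exact ⟨this.1, this.2⟩

lemma desc_Dv (v : V) : Desc T root v (Dv T root v) := by
  have := (Dv_spec (T := T) (root := root) v).1
  simpa [descFinset] using this

lemma keyF_le_Dv {v w : V} (h : w ∈ descFinset T root v) :
    keyF T root w ≤ keyF T root (Dv T root v) := by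
  rw [← (Dv_spec v).2]
  exact Finset.le_sup h

lemma Dv_unique {v w : V} (hw : w ∈ descFinset T root v)
    (hmax : ∀ x ∈ descFinset T root v, keyF T root x ≤ keyF T root w) :
    Dv T root v = w :=
  keyF_inj (le_antisymm (hmax _ (Dv_spec v).1) (keyF_le_Dv hw))

lemma lamMax_eq_level_Dv (v : V) : lamMax T root v = T.dist root (Dv T root v) := by
  unfold lamMax
  apply le_antisymm
  · apply Finset.sup_le
    intro w _
    by_cases hw : Desc T root v w
    · rw [if_pos hw]
      exact level_le_of_keyF_le (keyF_le_Dv (by simp [descFinset, hw]))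
    · rw [if_neg hw]; omega
  · have := Finset.le_sup (f := fun w => if Desc T root v w then T.dist root w else 0)
      (Finset.mem_univ (Dv T root v))
    simpa [desc_Dv v] using this

lemma descFinset_subset (hc : T.Connected) {v u : V} (h : Desc T root v u) :
    descFinset T root u ⊆ descFinset T root v := by
  intro x hx
  simp only [descFinset, Finset.mem_filter, Finset.mem_univ, true_and] at hx ⊢
  exact desc_trans hc h hx

lemma Dv_eq_of_between (hc : T.Connected) {v u : V} (h1 : Desc T root v u)
    (h2 : Desc T root u (Dv T root v)) : Dv T root u = Dv T root v := by
  apply Dv_unique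
  · simp [descFinset, h2]
  · intro x hx
    exact keyF_le_Dv (descFinset_subset hc h1 hx)

lemma Dv_idem (hc : T.Connected) (v : V) : Dv T root (Dv T root v) = Dv T root v :=
  Dv_eq_of_between hc (desc_Dv v) (desc_self _)

variable (T root) in
/-- the fiber of the map `Dv` over `d` -/
def fib (d : V) : Finset V := Finset.univ.filter (fun v => Dv T root v = d)

variable (T root) in
/-- the set of `Dv`-fixed points (the leaves, plus possibly the root) -/
def leafF : Finset V := Finset.univ.filter (fun d => Dv T root d = d)

lemma mem_fib_iff {d v : V} : v ∈ fib T root d ↔ Dv T root v = d := by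
  simp [fib]

lemma Dv_mem_leafF (hc : T.Connected) (v : V) : Dv T root v ∈ leafF T root := by
  simp [leafF, Dv_idem hc]

lemma desc_of_mem_fib {d v : V} (h : v ∈ fib T root d) : Desc T root v d := by
  rw [mem_fib_iff] at h
  exact h ▸ desc_Dv v

lemma level_le_of_mem_fib {d v : V} (h : v ∈ fib T root d) :
    T.dist root v ≤ T.dist root d := desc_level_le (desc_of_mem_fib h)

lemma self_mem_fib {d : V} (hd : d ∈ leafF T root) : d ∈ fib T root d := by
  simp only [leafF, Finset.mem_filter] at hd
  simp [fib, hd.2]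

lemma fib_closed (hT : T.IsTree) {d v : V} (h : v ∈ fib T root d) (hlt : T.dist root v < T.dist root d) :
    ∃ c ∈ fib T root d, T.dist root c = T.dist root v + 1 := by
  have hc := hT.isConnected
  obtain ⟨c, hc1, hc2, hc3⟩ := desc_mid (root := root) hc (desc_of_mem_fib h)
    (T.dist root v + 1) (by omega) (by omega)
  refine ⟨c, ?_, hc3⟩
  rw [mem_fib_iff] at h ⊢
  rw [← h]
  exact Dv_eq_of_between hc hc1 (h ▸ hc2)

end chunk4
end Stmt6


namespace Stmt6
section chunk5
variable {V : Type*} [Fintype V] {T : SimpleGraph V} {root : V}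

variable (T root) in
/-- the set of levels of the fiber over `d` -/
def lvls (d : V) : Finset ℕ := (fib T root d).image (T.dist root)

variable (T root) in
/-- the smallest level in the fiber over `d` -/
def aF (d : V) : ℕ := sInf {t | t ∈ lvls T root d}

lemma lvls_nonempty {d : V} (hd : d ∈ leafF T root) : (lvls T root d).Nonempty :=
  ⟨_, Finset.mem_image_of_mem _ (self_mem_fib hd)⟩

lemma aF_mem {d : V} (hd : d ∈ leafF T root) : aF T root d ∈ lvls T root d := by
  have hne : {t | t ∈ lvls T root d}.Nonempty := by
    obtain ⟨t, ht⟩ := lvls_nonempty hd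
    exact ⟨t, ht⟩
  exact Nat.sInf_mem hne

lemma aF_le {d : V} {t : ℕ} (ht : t ∈ lvls T root d) : aF T root d ≤ t :=
  Nat.sInf_le ht

lemma lvls_eq_Icc (hT : T.IsTree) {d : V} (hd : d ∈ leafF T root) :
    lvls T root d = Finset.Icc (aF T root d) (T.dist root d) := by
  ext t
  simp only [Finset.mem_Icc]
  constructor
  · intro ht
    refine ⟨aF_le ht, ?_⟩
    obtain ⟨v, hv, hvt⟩ := Finset.mem_image.mp ht
    rw [← hvt]
    exact level_le_of_mem_fib hv
  · rintro ⟨hat, htL⟩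
    induction t, hat using Nat.le_induction with
    | base => exact aF_mem hd
    | succ t hat ih =>
      obtain ⟨v, hv, hvt⟩ := Finset.mem_image.mp (ih (by omega))
      obtain ⟨c, hcm, hcl⟩ := fib_closed hT hv (by omega)
      exact Finset.mem_image.mpr ⟨c, hcm, by omega⟩

lemma card_fib_filter (hT : T.IsTree) {d : V} (P : ℕ → Prop) (Q : V → Prop)
    [DecidablePred P] [DecidablePred Q]
    (hQ : ∀ v ∈ fib T root d, (Q v ↔ P (T.dist root v))) :
    ((fib T root d).filter Q).card = ((lvls T root d).filter P).card := by
  rw [Finset.filter_congr hQ, lvls, Finset.filter_image]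
  refine (Finset.card_image_of_injOn ?_).symm
  intro v hv v' hv' hvv
  simp only [Finset.coe_filter, Set.mem_setOf_eq] at hv hv'
  exact anc_unique hT (desc_of_mem_fib hv.1) (desc_of_mem_fib hv'.1) hvv

lemma root_iff_level {v : V} (hc : T.Connected) : v = root ↔ T.dist root v = 0 := by
  rw [(hc root v).dist_eq_zero_iff]
  exact comm

lemma halfFloor_iff_of_mem_fib {d v : V} (h : v ∈ fib T root d) :
    v ∈ halfFloor T root ↔ 2 * T.dist root v ≤ T.dist root d := by
  have hL : lamMax T root v = T.dist root d := by
    rw [lamMax_eq_level_Dv, mem_fib_iff.mp h]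
  unfold halfFloor
  simp only [Set.mem_setOf_eq, hL]
  omega

lemma halfCeil_iff_of_mem_fib {d v : V} (h : v ∈ fib T root d) :
    v ∈ halfCeil T root ↔ 2 * T.dist root v ≤ T.dist root d + 1 := by
  have hL : lamMax T root v = T.dist root d := by
    rw [lamMax_eq_level_Dv, mem_fib_iff.mp h]
  unfold halfCeil
  simp only [Set.mem_setOf_eq, hL]
  omega

/-- number of non-root vertices in the fiber over `d` -/
lemma card_fib_nonroot (hT : T.IsTree) {d : V} (hd : d ∈ leafF T root) :
    ((fib T root d).filter (fun v => v ≠ root)).card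
      = T.dist root d + 1 - max (aF T root d) 1 := by
  rw [show ((fib T root d).filter (fun v => v ≠ root)).card
      = ((lvls T root d).filter (fun t => ¬ (t = 0))).card from
    card_fib_filter hT _ _
      (fun v _ => by rw [ne_eq, not_iff_not]; exact root_iff_level hT.isConnected),
    lvls_eq_Icc hT hd]
  have h2 : (Finset.Icc (aF T root d) (T.dist root d)).filter (fun t => ¬ (t = 0))
      = Finset.Icc (max (aF T root d) 1) (T.dist root d) := by
    ext t
    simp only [Finset.mem_filter, Finset.mem_Icc]
    omega
  rw [h2, Nat.card_Icc]

/-- number of non-root floor vertices in the fiber over `d` -/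
lemma card_fib_floor (hT : T.IsTree) {d : V} (hd : d ∈ leafF T root) :
    ((fib T root d).filter (fun v => v ≠ root ∧ v ∈ halfFloor T root)).card
      = T.dist root d / 2 + 1 - max (aF T root d) 1 := by
  rw [show ((fib T root d).filter (fun v => v ≠ root ∧ v ∈ halfFloor T root)).card
      = ((lvls T root d).filter
          (fun t => ¬ (t = 0) ∧ 2 * t ≤ T.dist root d)).card from
    card_fib_filter hT _ _
      (fun v hv => by
        apply and_congr
        · rw [ne_eq, not_iff_not]; exact root_iff_level hT.isConnected
        · exact halfFloor_iff_of_mem_fib hv),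
    lvls_eq_Icc hT hd]
  have h2 : (Finset.Icc (aF T root d) (T.dist root d)).filter
        (fun t => ¬ (t = 0) ∧ 2 * t ≤ T.dist root d)
      = Finset.Icc (max (aF T root d) 1) (T.dist root d / 2) := by
    ext t
    simp only [Finset.mem_filter, Finset.mem_Icc]
    omega
  rw [h2, Nat.card_Icc]

lemma sum_fiberwise (hT : T.IsTree) (P : V → Prop) [DecidablePred P] :
    (Finset.univ.filter P).card
      = ∑ d ∈ leafF T root, ((fib T root d).filter P).card := by
  rw [Finset.card_eq_sum_card_fiberwise
    (f := Dv T root) (t := leafF T root)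
    (fun v _ => Dv_mem_leafF hT.isConnected v)]
  apply Finset.sum_congr rfl
  intro d _
  congr 1
  rw [Finset.filter_comm]
  congr 1

end chunk5
end Stmt6


namespace Stmt6
section chunk6
variable {V : Type*} [Fintype V] {T : SimpleGraph V} {root : V}

lemma lamMax_mono (hc : T.Connected) {u v : V} (h : Desc T root u v) :
    lamMax T root v ≤ lamMax T root u := by
  rw [lamMax_eq_level_Dv, lamMax_eq_level_Dv]
  exact level_le_of_keyF_le (keyF_le_Dv (descFinset_subset hc h (Dv_spec v).1))

variable (T root) in
/-- the parent function -/
def par (hT : T.IsTree) (v : V) : V :=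
  if h : v = root then v else Classical.choose (exists_parent hT h)

lemma par_spec (hT : T.IsTree) {v : V} (hv : v ≠ root) :
    T.Adj (par T root hT v) v ∧ T.dist root (par T root hT v) + 1 = T.dist root v := by
  rw [par, dif_neg hv]
  exact Classical.choose_spec (exists_parent hT hv)

lemma par_desc (hT : T.IsTree) {v : V} (hv : v ≠ root) :
    Desc T root (par T root hT v) v := by
  obtain ⟨h1, h2⟩ := par_spec hT hv
  exact adj_desc hT.isConnected h1 (by omega)

lemma par_mem_halfFloor (hT : T.IsTree) {v : V} (hv : v ≠ root)
    (hf : v ∈ halfFloor T root) : par T root hT v ∈ halfFloor T root := by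
  obtain ⟨h1, h2⟩ := par_spec hT hv
  have hm := lamMax_mono hT.isConnected (par_desc hT hv)
  simp only [halfFloor, Set.mem_setOf_eq] at hf ⊢
  omega

lemma card_nonroot_eq_edges (hT : T.IsTree) :
    T.edgeSet.ncard = (Finset.univ.filter (fun v => v ≠ root)).card := by
  have h1 : T.edgeFinset.card + 1 = Fintype.card V := hT.card_edgeFinset
  have h2 : T.edgeSet.ncard = T.edgeFinset.card := by
    rw [← SimpleGraph.coe_edgeFinset, Set.ncard_coe_finset]
  have h3 : (Finset.univ.filter (fun v => v ≠ root)).card = Fintype.card V - 1 := by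
    rw [Finset.filter_ne', Finset.card_erase_of_mem (Finset.mem_univ root)]
    rfl
  have h4 : 0 < Fintype.card V := Fintype.card_pos_iff.mpr ⟨root⟩
  omega

lemma edgesIn_halfFloor_eq (hT : T.IsTree) :
    edgesIn T (halfFloor T root)
      = (Finset.univ.filter (fun v => v ≠ root ∧ v ∈ halfFloor T root)).card := by
  have hset : {e ∈ T.edgeSet | ∀ x ∈ e, x ∈ halfFloor T root}
      = ↑(T.edgeFinset.filter (fun e => ∀ x ∈ e, x ∈ halfFloor T root)) := by
    ext e
    simp [SimpleGraph.mem_edgeFinset, Set.mem_setOf_eq]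
  rw [edgesIn, hset, Set.ncard_coe_finset]
  symm
  apply Finset.card_bij (fun v _ => s(par T root hT v, v))
  · intro v hv
    simp only [Finset.mem_filter, Finset.mem_univ, true_and] at hv
    obtain ⟨hvr, hvf⟩ := hv
    obtain ⟨h1, h2⟩ := par_spec hT hvr
    simp only [Finset.mem_filter, SimpleGraph.mem_edgeFinset,
      SimpleGraph.mem_edgeSet]
    refine ⟨h1, ?_⟩
    intro x hx
    rw [Sym2.mem_iff] at hx
    rcases hx with rfl | rfl
    · exact par_mem_halfFloor hT hvr hvf
    · exact hvf
  · intro v hv w hw hvw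
    simp only [Finset.mem_filter, Finset.mem_univ, true_and] at hv hw
    obtain ⟨h1, h2⟩ := par_spec hT hv.1
    obtain ⟨h3, h4⟩ := par_spec hT hw.1
    rw [Sym2.eq_iff] at hvw
    rcases hvw with ⟨-, h⟩ | ⟨ha, hb⟩
    · exact h
    · exfalso
      have e1 := congrArg (T.dist root) ha
      have e2 := congrArg (T.dist root) hb
      omega
  · intro e he
    simp only [Finset.mem_filter, SimpleGraph.mem_edgeFinset,
      SimpleGraph.mem_edgeSet] at he
    induction e using Sym2.ind with
    | _ x y =>
      obtain ⟨hadj0, hmem⟩ := he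
      have hadj : T.Adj x y := hadj0
      clear hadj0
      have hx : x ∈ halfFloor T root := hmem x (by simp)
      have hy : y ∈ halfFloor T root := hmem y (by simp)
      rcases adj_dist_cases (root := root) hT hadj with hc1 | hc1
      · -- y is the child
        have hyr : y ≠ root := by
          rw [ne_eq, root_iff_level hT.isConnected]
          omega
        refine ⟨y, ?_, ?_⟩
        · simp only [Finset.mem_filter, Finset.mem_univ, true_and]
          exact ⟨hyr, hy⟩
        · obtain ⟨h1, h2⟩ := par_spec hT hyr
          have : par T root hT y = x :=
            parent_unique (root := root) hT h1 (by omega) hadj (by omega)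
          rw [this]
      · -- x is the child
        have hxr : x ≠ root := by
          rw [ne_eq, root_iff_level hT.isConnected]
          omega
        refine ⟨x, ?_, ?_⟩
        · simp only [Finset.mem_filter, Finset.mem_univ, true_and]
          exact ⟨hxr, hx⟩
        · obtain ⟨h1, h2⟩ := par_spec hT hxr
          have : par T root hT x = y :=
            parent_unique (root := root) hT h1 (by omega) hadj.symm (by omega)
          rw [this, Sym2.eq_swap]

end chunk6
end Stmt6


namespace Stmt6
section chunk7
variable {V : Type*} [Fintype V] {T : SimpleGraph V} {root : V}

lemma isRootLeaf_iff (hc : T.Connected) {v : V} :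
    IsRootLeaf T root v ↔ v ≠ root ∧ Dv T root v = v := by
  constructor
  · rintro ⟨h1, h2⟩
    exact ⟨h1, h2 _ (desc_Dv v)⟩
  · rintro ⟨h1, h2⟩
    refine ⟨h1, fun w hw => ?_⟩
    have hk : keyF T root w ≤ keyF T root v := by
      have := keyF_le_Dv (T := T) (root := root) (v := v) (w := w) (by simp [descFinset, hw])
      rwa [h2] at this
    have hl : T.dist root w ≤ T.dist root v := level_le_of_keyF_le hk
    have hl2 : T.dist root v ≤ T.dist root w := desc_level_le hw
    unfold Desc at hw
    have : T.dist v w = 0 := by omega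
    exact (((hc v w).dist_eq_zero_iff).mp this).symm

lemma aF_le_level {d : V} (hd : d ∈ leafF T root) :
    aF T root d ≤ T.dist root d := by
  obtain ⟨v, hv, hvt⟩ := Finset.mem_image.mp (aF_mem hd)
  rw [← hvt]
  exact level_le_of_mem_fib hv

lemma level_mem_lvls (v : V) : T.dist root v ∈ lvls T root (Dv T root v) :=
  Finset.mem_image_of_mem _ (mem_fib_iff.mpr rfl)

lemma exists_two_children (hT : T.IsTree) {v : V} (hv : v ≠ root)
    (hdeg : 2 < degOf T v) :
    ∃ c1 c2, c1 ≠ c2 ∧ T.Adj v c1 ∧ T.Adj v c2 ∧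
      T.dist root c1 = T.dist root v + 1 ∧ T.dist root c2 = T.dist root v + 1 := by
  have hcard : (T.neighborSet v).toFinset.card = degOf T v :=
    (Set.ncard_eq_toFinset_card' _).symm
  set nbrs := (T.neighborSet v).toFinset with hnbrs
  have hmem : ∀ c ∈ nbrs, T.Adj v c := by
    intro c hcm
    rw [hnbrs, Set.mem_toFinset] at hcm
    exact hcm
  set ch := nbrs.filter (fun c => T.dist root c = T.dist root v + 1) with hch
  set pa := nbrs.filter (fun c => ¬ (T.dist root c = T.dist root v + 1)) with hpa
  have hsplit : ch.card + pa.card = nbrs.card :=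
    Finset.card_filter_add_card_filter_not _
  have hpar : ∀ p ∈ pa, T.Adj p v ∧ T.dist root p + 1 = T.dist root v := by
    intro p hp
    rw [hpa, Finset.mem_filter] at hp
    have hadj := hmem p hp.1
    rcases adj_dist_cases (root := root) hT hadj with hc1 | hc1
    · exact absurd hc1 hp.2
    · exact ⟨hadj.symm, by omega⟩
  have hpa1 : pa.card ≤ 1 := by
    apply Finset.card_le_one.mpr
    intro p1 h1 p2 h2
    obtain ⟨a1, b1⟩ := hpar p1 h1
    obtain ⟨a2, b2⟩ := hpar p2 h2
    exact parent_unique (root := root) hT a1 b1 a2 b2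
  have h2 : 1 < ch.card := by omega
  obtain ⟨c1, hc1, c2, hc2, hne⟩ := Finset.one_lt_card.mp h2
  rw [hch, Finset.mem_filter] at hc1 hc2
  exact ⟨c1, c2, hne, hmem c1 hc1.1, hmem c2 hc2.1, hc1.2, hc2.2⟩

lemma child_in_fib_of_low (hT : T.IsTree) {v c d : V} (hvc : T.Adj v c)
    (hlev : T.dist root c = T.dist root v + 1)
    (hd : d = Dv T root c) (ha : aF T root d ≤ T.dist root v) :
    Dv T root v = d := by
  have hc := hT.isConnected
  have hdlf : d ∈ leafF T root := hd ▸ Dv_mem_leafF hc c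
  have hdesc_cd : Desc T root c d := hd ▸ desc_Dv c
  have hlv : T.dist root v ∈ lvls T root d := by
    rw [lvls_eq_Icc hT hdlf, Finset.mem_Icc]
    have h1 : T.dist root c ≤ T.dist root d := desc_level_le hdesc_cd
    omega
  obtain ⟨u, hu, hut⟩ := Finset.mem_image.mp hlv
  have hdesc_vd : Desc T root v d :=
    desc_trans hc (adj_desc hc hvc hlev) hdesc_cd
  have : u = v := anc_unique hT (desc_of_mem_fib hu) hdesc_vd hut
  rw [← this]
  exact mem_fib_iff.mp hu

lemma exists_high_fiber (hT : T.IsTree) {v c1 c2 : V} (hv : v ≠ root)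
    (hne : c1 ≠ c2) (h1 : T.Adj v c1) (h2 : T.Adj v c2)
    (hl1 : T.dist root c1 = T.dist root v + 1)
    (hl2 : T.dist root c2 = T.dist root v + 1) :
    ∃ d ∈ leafF T root, 2 ≤ aF T root d := by
  have hc := hT.isConnected
  have hvl : 1 ≤ T.dist root v := by
    have := dist_pos_of_ne hc (Ne.symm hv)
    omega
  have hd12 : Dv T root c1 ≠ Dv T root c2 := by
    intro heq
    have e1 : Desc T root c1 (Dv T root c1) := desc_Dv c1
    have e2 : Desc T root c2 (Dv T root c1) := heq ▸ desc_Dv c2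
    exact hne (anc_unique hT e1 e2 (by omega))
  by_cases ha1 : aF T root (Dv T root c1) ≤ T.dist root v
  · by_cases ha2 : aF T root (Dv T root c2) ≤ T.dist root v
    · exfalso
      have e1 := child_in_fib_of_low hT h1 hl1 rfl ha1
      have e2 := child_in_fib_of_low hT h2 hl2 rfl ha2
      exact hd12 (e1 ▸ e2 ▸ rfl)
    · exact ⟨Dv T root c2, Dv_mem_leafF hc c2, by omega⟩
  · exact ⟨Dv T root c1, Dv_mem_leafF hc c1, by omega⟩

end chunk7
end Stmt6


namespace Stmt6

/-- the per-fiber excess -/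
def exc0 (L aa : ℕ) : ℕ := (L + 1 - max aa 1) - 2 * (L / 2 + 1 - max aa 1)

lemma arith1 {L aa : ℕ} (h : aa ≤ L) :
    L + 1 - max aa 1 = 2 * (L / 2 + 1 - max aa 1) + exc0 L aa := by
  unfold exc0; omega

lemma arith2 {L aa : ℕ} (h1 : aa ≤ 1) : exc0 L aa = L % 2 := by
  unfold exc0; omega

lemma arith3 {L aa : ℕ} (h1 : 2 ≤ aa) (h2 : aa ≤ L) : 1 ≤ exc0 L aa := by
  unfold exc0; omega

lemma arith4 {L aa t : ℕ} (h0 : exc0 L aa = 1) (h1 : 2 ≤ aa) (h2 : aa ≤ t)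
    (h3 : t ≤ L) (h4 : 2 * t ≤ L + 1) : 2 * t ≤ L := by
  unfold exc0 at h0; omega

lemma arith5 {L aa t : ℕ} (h0 : exc0 L aa = 0) (hL : aa ≤ L) (h2 : aa ≤ t)
    (h3 : t ≤ L) (h4 : 2 * t ≤ L + 1) : 2 * t ≤ L := by
  unfold exc0 at h0; omega

end Stmt6

/-- if `e(T) = 2 e(⌊T/2⌋) + 1` then either `⌊T/2⌋ = ⌈T/2⌉` or `T`
is a spider with exactly one leg of odd length. -/
theorem stmt_6 {V : Type*} [Fintype V] (T : SimpleGraph V) (hT : T.IsTree) (root : V)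
    (heq : T.edgeSet.ncard = 2 * edgesIn T (halfFloor T root) + 1) :
    halfFloor T root = halfCeil T root ∨
      ((∀ v, v ≠ root → degOf T v ≤ 2) ∧
        {v | IsRootLeaf T root v ∧ Odd (T.dist root v)}.ncard = 1) := by
  classical
  have hc := hT.isConnected
  have e1 : T.edgeSet.ncard
      = ∑ d ∈ Stmt6.leafF T root,
          (T.dist root d + 1 - max (Stmt6.aF T root d) 1) := by
    rw [Stmt6.card_nonroot_eq_edges hT,
      Stmt6.sum_fiberwise (root := root) hT (fun v => v ≠ root)]
    exact Finset.sum_congr rfl (fun d hd => Stmt6.card_fib_nonroot hT hd)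
  have e2 : edgesIn T (halfFloor T root)
      = ∑ d ∈ Stmt6.leafF T root,
          (T.dist root d / 2 + 1 - max (Stmt6.aF T root d) 1) := by
    rw [Stmt6.edgesIn_halfFloor_eq hT,
      Stmt6.sum_fiberwise (root := root) hT (fun v => v ≠ root ∧ v ∈ halfFloor T root)]
    exact Finset.sum_congr rfl (fun d hd => Stmt6.card_fib_floor hT hd)
  have haL : ∀ d ∈ Stmt6.leafF T root, Stmt6.aF T root d ≤ T.dist root d :=
    fun d hd => Stmt6.aF_le_level hd
  have hper : ∀ d ∈ Stmt6.leafF T root,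
      (T.dist root d + 1 - max (Stmt6.aF T root d) 1)
        = 2 * (T.dist root d / 2 + 1 - max (Stmt6.aF T root d) 1)
          + Stmt6.exc0 (T.dist root d) (Stmt6.aF T root d) :=
    fun d hd => Stmt6.arith1 (haL d hd)
  have hsum : ∑ d ∈ Stmt6.leafF T root,
      Stmt6.exc0 (T.dist root d) (Stmt6.aF T root d) = 1 := by
    have h := Finset.sum_congr rfl hper
    rw [Finset.sum_add_distrib, ← Finset.mul_sum] at h
    rw [h, ← e2] at e1
    omega
  by_cases hS : ∃ d ∈ Stmt6.leafF T root, 2 ≤ Stmt6.aF T root d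
  · -- there is a "high" fiber: the floor and ceil halves coincide
    left
    obtain ⟨d0, hd0A, hd0a⟩ := hS
    have hge : 1 ≤ Stmt6.exc0 (T.dist root d0) (Stmt6.aF T root d0) :=
      Stmt6.arith3 hd0a (haL d0 hd0A)
    have hle : Stmt6.exc0 (T.dist root d0) (Stmt6.aF T root d0) ≤ 1 :=
      hsum ▸ Finset.single_le_sum
        (f := fun d => Stmt6.exc0 (T.dist root d) (Stmt6.aF T root d))
        (fun i _ => Nat.zero_le _) hd0A
    have hrest : ∀ d ∈ Stmt6.leafF T root, d ≠ d0 →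
        Stmt6.exc0 (T.dist root d) (Stmt6.aF T root d) = 0 := by
      intro d hd hdd
      have h := Finset.add_sum_erase (Stmt6.leafF T root)
        (fun d => Stmt6.exc0 (T.dist root d) (Stmt6.aF T root d)) hd0A
      rw [hsum] at h
      have h0 : ∑ d ∈ (Stmt6.leafF T root).erase d0,
          Stmt6.exc0 (T.dist root d) (Stmt6.aF T root d) = 0 := by omega
      exact Finset.sum_eq_zero_iff.mp h0 d (Finset.mem_erase.mpr ⟨hdd, hd⟩)
    ext v
    simp only [halfFloor, halfCeil, Set.mem_setOf_eq]
    constructor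
    · intro h; omega
    · intro h
      have hdA : Stmt6.Dv T root v ∈ Stmt6.leafF T root := Stmt6.Dv_mem_leafF hc v
      have hvfib : v ∈ Stmt6.fib T root (Stmt6.Dv T root v) := Stmt6.mem_fib_iff.mpr rfl
      have hlam : lamMax T root v = T.dist root (Stmt6.Dv T root v) :=
        Stmt6.lamMax_eq_level_Dv v
      have hva : Stmt6.aF T root (Stmt6.Dv T root v) ≤ T.dist root v :=
        Stmt6.aF_le (Stmt6.level_mem_lvls v)
      have hvL : T.dist root v ≤ T.dist root (Stmt6.Dv T root v) :=
        Stmt6.level_le_of_mem_fib hvfib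
      rw [hlam] at h ⊢
      have hgoal : 2 * T.dist root v ≤ T.dist root (Stmt6.Dv T root v) := by
        by_cases hdd : Stmt6.Dv T root v = d0
        · have h1 : Stmt6.exc0 (T.dist root (Stmt6.Dv T root v))
              (Stmt6.aF T root (Stmt6.Dv T root v)) = 1 := by
            rw [hdd]; omega
          refine Stmt6.arith4 h1 ?_ hva hvL (by omega)
          rw [hdd]; exact hd0a
        · exact Stmt6.arith5 (hrest _ hdA hdd) (haL _ hdA) hva hvL (by omega)
      omega
  · -- no high fiber: the tree is a spider with exactly one odd leg
    right
    push_neg at hS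
    constructor
    · intro v hv
      by_contra hdeg
      push_neg at hdeg
      obtain ⟨c1, c2, hne, h1, h2, hl1, hl2⟩ :=
        Stmt6.exists_two_children hT hv (by omega)
      obtain ⟨d, hd, hda⟩ := Stmt6.exists_high_fiber hT hv hne h1 h2 hl1 hl2
      have := hS d hd
      omega
    · have hexc_eq : ∀ d ∈ Stmt6.leafF T root,
          Stmt6.exc0 (T.dist root d) (Stmt6.aF T root d) = T.dist root d % 2 :=
        fun d hd => Stmt6.arith2 (by have := hS d hd; omega)
      have hmod : ∑ d ∈ Stmt6.leafF T root, T.dist root d % 2 = 1 := by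
        rw [← Finset.sum_congr rfl hexc_eq, hsum]
      have hcardOdd :
          ((Stmt6.leafF T root).filter (fun d => T.dist root d % 2 = 1)).card = 1 := by
        have hite : ∀ d ∈ Stmt6.leafF T root,
            T.dist root d % 2 = if T.dist root d % 2 = 1 then 1 else 0 := by
          intro d _
          by_cases hp : T.dist root d % 2 = 1
          · simp [hp]
          · simp [hp]; omega
        rw [Finset.card_filter, ← Finset.sum_congr rfl hite]
        exact hmod
      have hseteq : {v | IsRootLeaf T root v ∧ Odd (T.dist root v)}
          = ↑((Stmt6.leafF T root).filter (fun d => T.dist root d % 2 = 1)) := by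
        ext v
        simp only [Set.mem_setOf_eq, Finset.coe_filter, Stmt6.leafF,
          Finset.mem_filter, Finset.mem_univ, true_and,
          Stmt6.isRootLeaf_iff hc, Nat.odd_iff]
        constructor
        · rintro ⟨⟨hv1, hv2⟩, hv3⟩
          exact ⟨hv2, hv3⟩
        · rintro ⟨hv2, hv3⟩
          refine ⟨⟨?_, hv2⟩, hv3⟩
          rw [ne_eq, Stmt6.root_iff_level hc]
          omega
      rw [hseteq, Set.ncard_coe_finset, hcardOdd]
end
end

section
/- Let $T$ be a finite tree rooted at $v_0$ with at least two vertices. Let $E_1$ be the set of edges incident to $v_0$ but not to a leaf, and $E_2$ the set of edges incident to a leaf but not to $v_0$ (a leaf is a non-root vertex with no descendants other than itself). Then $|E_2| - |E_1| = \sum_{v \in V(T) \setminus \{v_0\}} \max(\deg(v) - 2, 0)$. -/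
open Classical

noncomputable section

section Stmt7Aux

open SimpleGraph Finset

variable {V : Type*} {T : SimpleGraph V} {root : V}

lemma aux_exists_adj (hc : T.Connected) {v w : V} (h : v ≠ w) : ∃ u, T.Adj v u := by
  obtain ⟨p⟩ := hc v w
  cases p with
  | nil => exact absurd rfl h
  | cons h' p' => exact ⟨_, h'⟩

lemma aux_adj_dist (hT : T.IsTree) {v u : V} (h : T.Adj v u) :
    T.dist root u = T.dist root v + 1 ∨ T.dist root v = T.dist root u + 1 := by
  have hc := hT.isConnected
  have htri1 : T.dist root u ≤ T.dist root v + 1 := by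
    have := hc.dist_triangle (u := root) (v := v) (w := u)
    have h1 : T.dist v u = 1 := (T.dist_eq_one_iff_adj).2 h
    omega
  have htri2 : T.dist root v ≤ T.dist root u + 1 := by
    have := hc.dist_triangle (u := root) (v := u) (w := v)
    have h1 : T.dist u v = 1 := (T.dist_eq_one_iff_adj).2 h.symm
    omega
  have hne : T.dist root u ≠ T.dist root v := by
    intro heq
    obtain ⟨p, hp, hlen⟩ := hc.exists_path_of_dist root u
    by_cases hv : v ∈ p.support
    · have h1 : T.dist root v ≤ (p.takeUntil v hv).length := T.dist_le _
      have h2 : (p.takeUntil v hv).length + (p.dropUntil v hv).length = p.length := by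
        rw [← Walk.length_append, p.take_spec hv]
      have h3 : (p.dropUntil v hv).length ≠ 0 := fun h0 =>
        h.ne (Walk.eq_of_length_eq_zero h0)
      omega
    · have hpath : (p.concat h.symm).IsPath := by
        rw [Walk.isPath_def, Walk.support_concat]
        simp [List.concat_eq_append, List.nodup_append, hp.support_nodup, hv]
        exact fun a ha hav => hv (hav ▸ ha)
      obtain ⟨q, hq, hqlen⟩ := hc.exists_path_of_dist root v
      have := (hT.existsUnique_path root v).unique hpath hq
      have hll := congrArg Walk.length this
      rw [Walk.length_concat] at hll
      omega
  omega

/-- parent existence -/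
lemma aux_exists_parent (hT : T.IsTree) {v : V} (hv : v ≠ root) :
    ∃ u, T.Adj v u ∧ T.dist root u + 1 = T.dist root v := by
  have hc := hT.isConnected
  have hd : T.dist v root ≠ 0 := by
    rw [dist_ne_zero_iff_ne_and_reachable]
    exact ⟨hv, hc v root⟩
  obtain ⟨q, hqlen⟩ := (hc v root).exists_walk_length_eq_dist
  cases q with
  | nil => exact absurd rfl hv
  | cons hadj q' =>
    rename_i u
    refine ⟨u, hadj, ?_⟩
    have h1 : T.dist u root ≤ q'.length := T.dist_le _
    have h2 : T.dist root v ≤ T.dist root u + 1 := by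
      have := hc.dist_triangle (u := root) (v := u) (w := v)
      have : T.dist u v = 1 := (T.dist_eq_one_iff_adj).2 hadj.symm
      have := hc.dist_triangle (u := root) (v := u) (w := v)
      omega
    have h3 : T.dist root u = T.dist u root := T.dist_comm
    have h4 : T.dist root v = T.dist v root := T.dist_comm
    simp only [Walk.length_cons] at hqlen
    omega

lemma aux_parent_unique (hT : T.IsTree) {v u₁ u₂ : V}
    (h1 : T.Adj v u₁) (h2 : T.Adj v u₂)
    (hd1 : T.dist root u₁ + 1 = T.dist root v)
    (hd2 : T.dist root u₂ + 1 = T.dist root v) : u₁ = u₂ := by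
  have hc := hT.isConnected
  have key : ∀ (u : V), T.Adj v u → T.dist root u + 1 = T.dist root v →
      ∃ (p : T.Walk root u) (h : T.Adj u v), (p.concat h).IsPath := by
    intro u hadj hd
    obtain ⟨p, hp, hlen⟩ := hc.exists_path_of_dist root u
    have hv : v ∉ p.support := by
      intro hv
      have hA : T.dist root v ≤ (p.takeUntil v hv).length := T.dist_le _
      have hB : (p.takeUntil v hv).length ≤ p.length := Walk.length_takeUntil_le _ _
      omega
    refine ⟨p, hadj.symm, ?_⟩
    rw [Walk.isPath_def, Walk.support_concat]
    simp [List.concat_eq_append, List.nodup_append, hp.support_nodup, hv]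
    exact fun a ha hav => hv (hav ▸ ha)
  obtain ⟨p1, ha1, hp1⟩ := key u₁ h1 hd1
  obtain ⟨p2, ha2, hp2⟩ := key u₂ h2 hd2
  have := (hT.existsUnique_path root v).unique hp1 hp2
  obtain ⟨hv, -⟩ := Walk.concat_inj this
  exact hv

lemma aux_child_desc (hT : T.IsTree) {v u : V} (h : T.Adj v u)
    (hd : T.dist root u = T.dist root v + 1) : Desc T root v u := by
  unfold Desc
  have h1 : T.dist v u = 1 := (T.dist_eq_one_iff_adj).2 h
  omega

lemma aux_desc_child (hT : T.IsTree) {v w : V} (hw : Desc T root v w) (hne : w ≠ v) :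
    ∃ u, T.Adj v u ∧ T.dist root u = T.dist root v + 1 := by
  have hc := hT.isConnected
  obtain ⟨q, hqlen⟩ := (hc v w).exists_walk_length_eq_dist
  cases q with
  | nil => exact absurd rfl hne
  | cons hadj q' =>
    rename_i u
    refine ⟨u, hadj, ?_⟩
    have h1 : T.dist u w ≤ q'.length := T.dist_le _
    have htri1 : T.dist root u ≤ T.dist root v + T.dist v u :=
      hc.dist_triangle
    have htva : T.dist v u = 1 := (T.dist_eq_one_iff_adj).2 hadj
    have htri2 : T.dist root w ≤ T.dist root u + T.dist u w :=
      hc.dist_triangle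
    have hdesc : T.dist root v + T.dist v w = T.dist root w := hw
    have hvw0 : T.dist v w ≠ 0 := by
      rw [dist_ne_zero_iff_ne_and_reachable]
      exact ⟨fun h' => hne h'.symm, hc v w⟩
    simp only [Walk.length_cons] at hqlen
    omega

lemma aux_leaf_iff (hT : T.IsTree) {v : V} :
    IsRootLeaf T root v ↔ v ≠ root ∧ ∃ u, T.neighborSet v = {u} := by
  constructor
  · rintro ⟨hne, hdesc⟩
    obtain ⟨p, hp, hdp⟩ := aux_exists_parent hT hne
    refine ⟨hne, p, ?_⟩
    ext x
    simp only [mem_neighborSet, Set.mem_singleton_iff]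
    constructor
    · intro hx
      rcases aux_adj_dist (root := root) hT hx with hcase | hcase
      · exfalso
        have := hdesc x (aux_child_desc hT hx hcase)
        exact hx.ne this.symm
      · exact aux_parent_unique hT hx hp (by omega) hdp
    · rintro rfl; exact hp
  · rintro ⟨hne, u, hu⟩
    refine ⟨hne, fun w hw => ?_⟩
    by_contra hwv
    obtain ⟨c, hc1, hc2⟩ := aux_desc_child hT hw hwv
    obtain ⟨p, hp1, hp2⟩ := aux_exists_parent hT hne
    have hcu : c = u := by
      have : c ∈ T.neighborSet v := hc1
      rwa [hu, Set.mem_singleton_iff] at this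
    have hpu : p = u := by
      have : p ∈ T.neighborSet v := hp1
      rwa [hu, Set.mem_singleton_iff] at this
    subst hcu; subst hpu
    omega

end Stmt7Aux

/-- for a finite rooted tree with at least two vertices, with `E₁`
the set of edges incident to the root but to no leaf, and `E₂` the set of edges
incident to a leaf but not to the root,
`|E₂| - |E₁| = ∑_{v ≠ root} max(deg v - 2, 0)`. -/
theorem stmt_7 {V : Type*} [Fintype V] (T : SimpleGraph V) (hT : T.IsTree) (root : V)
    (hcard : 1 < Fintype.card V) :
    ({e ∈ T.edgeSet | (∃ x ∈ e, IsRootLeaf T root x) ∧ root ∉ e}.ncard : ℤ) -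
        {e ∈ T.edgeSet | root ∈ e ∧ ∀ x ∈ e, ¬ IsRootLeaf T root x}.ncard =
      ∑ v ∈ Finset.univ.erase root, ((degOf T v : ℤ) - 2) ⊔ 0 := by
  classical
  have hc := hT.isConnected
  have hdeg1 : ∀ v : V, T.degree v = 1 ↔ ∃ u, T.neighborSet v = {u} := by
    intro v
    rw [← SimpleGraph.card_neighborFinset_eq_degree, Finset.card_eq_one]
    constructor
    · rintro ⟨u, hu⟩
      refine ⟨u, ?_⟩
      rw [← Set.coe_toFinset (T.neighborSet v), ← SimpleGraph.neighborFinset_def, hu,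
        Finset.coe_singleton]
    · rintro ⟨u, hu⟩
      refine ⟨u, Finset.coe_injective ?_⟩
      simp only [Finset.coe_singleton, SimpleGraph.neighborFinset_def, Set.coe_toFinset, hu]
  have hleaf : ∀ v : V, IsRootLeaf T root v ↔ v ≠ root ∧ T.degree v = 1 := by
    intro v
    rw [aux_leaf_iff hT, hdeg1]
  have hdegOf : ∀ v : V, degOf T v = T.degree v := by
    intro v
    rw [degOf, ← SimpleGraph.card_neighborFinset_eq_degree, ← Set.ncard_coe_finset,
      SimpleGraph.coe_neighborFinset]
  have hdegpos : ∀ v : V, 0 < T.degree v := by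
    intro v
    obtain ⟨w, hw⟩ := Fintype.exists_ne_of_one_lt_card hcard v
    obtain ⟨u, hu⟩ := aux_exists_adj hc (Ne.symm hw)
    rw [← SimpleGraph.card_neighborFinset_eq_degree, Finset.card_pos]
    exact ⟨u, (T.mem_neighborFinset v u).2 hu⟩
  -- basic counting facts
  have hNsum : ∑ v ∈ Finset.univ.erase root, T.degree v + T.degree root = ∑ v, T.degree v :=
    Finset.sum_erase_add _ _ (Finset.mem_univ root)
  have hNtot : ∑ v, T.degree v = 2 * T.edgeFinset.card := T.sum_degrees_eq_twice_card_edges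
  have hNedge : T.edgeFinset.card + 1 = Fintype.card V := hT.card_edgeFinset
  have hNcard : (Finset.univ.erase root).card + 1 = Fintype.card V := by
    rw [Finset.card_erase_of_mem (Finset.mem_univ root), Finset.card_univ]
    omega
  -- pointwise rewriting of the summand
  have hpt : ∀ v ∈ Finset.univ.erase root,
      ((degOf T v : ℤ) - 2) ⊔ 0 = ((T.degree v : ℤ) - 2) + (if T.degree v = 1 then 1 else 0) := by
    intro v _
    rw [hdegOf]
    have h1 := hdegpos v
    rcases Nat.lt_or_ge (T.degree v) 2 with h | h
    · have h2 : T.degree v = 1 := by omega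
      rw [h2, if_pos rfl]
      norm_num
    · have hne1 : T.degree v ≠ 1 := by omega
      rw [if_neg hne1, add_zero]
      apply sup_eq_left.2
      have h3 : (2:ℤ) ≤ (T.degree v : ℤ) := by exact_mod_cast h
      linarith
  have hsum1 : (∑ v ∈ Finset.univ.erase root, ((degOf T v : ℤ) - 2) ⊔ 0)
      = (∑ v ∈ Finset.univ.erase root, ((T.degree v : ℤ) - 2))
        + ∑ v ∈ Finset.univ.erase root, (if T.degree v = 1 then (1:ℤ) else 0) := by
    rw [← Finset.sum_add_distrib]
    exact Finset.sum_congr rfl hpt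
  have hsum2 : ∑ v ∈ Finset.univ.erase root, ((T.degree v : ℤ) - 2)
      = ((∑ v ∈ Finset.univ.erase root, T.degree v : ℕ) : ℤ)
        - 2 * ((Finset.univ.erase root).card : ℤ) := by
    rw [Finset.sum_sub_distrib, Finset.sum_const, nsmul_eq_mul]
    push_cast
    ring
  have hsum3 : ∑ v ∈ Finset.univ.erase root, (if T.degree v = 1 then (1:ℤ) else 0)
      = ((Finset.univ.filter (fun v => IsRootLeaf T root v)).card : ℤ) := by
    have hfe : (Finset.univ.erase root).filter (fun v => T.degree v = 1)
        = Finset.univ.filter (fun v => IsRootLeaf T root v) := by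
      ext v
      simp only [Finset.mem_filter, Finset.mem_erase, Finset.mem_univ, true_and, and_true, hleaf]
    rw [Finset.sum_boole, hfe]
  -- the E₁ count
  have hF1card : ((T.neighborFinset root).filter (fun u => ¬ IsRootLeaf T root u)).card
      = (T.edgeFinset.filter (fun e => root ∈ e ∧ ∀ x ∈ e, ¬ IsRootLeaf T root x)).card := by
    apply Finset.card_bij (fun u _ => s(root, u))
    · intro u hu
      simp only [Finset.mem_filter, SimpleGraph.mem_neighborFinset] at hu
      simp only [Finset.mem_filter, SimpleGraph.mem_edgeFinset, SimpleGraph.mem_edgeSet]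
      refine ⟨hu.1, Sym2.mem_mk_left _ _, ?_⟩
      intro x hx
      rcases Sym2.mem_iff.mp hx with rfl | rfl
      · exact fun hlf => hlf.1 rfl
      · exact hu.2
    · intro u1 h1 u2 h2 heq
      exact Sym2.congr_right.mp heq
    · intro e he
      simp only [Finset.mem_filter, SimpleGraph.mem_edgeFinset] at he
      obtain ⟨hee, hroot, hall⟩ := he
      refine ⟨Sym2.Mem.other hroot, ?_, Sym2.other_spec hroot⟩
      simp only [Finset.mem_filter, SimpleGraph.mem_neighborFinset]
      constructor
      · have h1 := Sym2.other_spec hroot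
        rw [← h1] at hee
        exact (T.mem_edgeSet).mp hee
      · exact hall _ (Sym2.other_mem hroot)
  have hsplitroot : ((T.neighborFinset root).filter (fun u => IsRootLeaf T root u)).card
      + ((T.neighborFinset root).filter (fun u => ¬ IsRootLeaf T root u)).card
      = T.degree root := by
    rw [Finset.card_filter_add_card_filter_not, SimpleGraph.card_neighborFinset_eq_degree]
  -- unique neighbor of a leaf
  have hnbex : ∀ v : V, IsRootLeaf T root v → ∃ u, T.neighborFinset v = {u} := by
    intro v hv
    obtain ⟨-, u, hu⟩ := (aux_leaf_iff hT).1 hv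
    refine ⟨u, Finset.coe_injective ?_⟩
    simp only [Finset.coe_singleton, SimpleGraph.neighborFinset_def, Set.coe_toFinset, hu]
  choose nb hnb using hnbex
  set nbT : V → V := fun v => if h : IsRootLeaf T root v then nb v h else v with hnbTdef
  have hnbT : ∀ v (h : IsRootLeaf T root v), T.neighborFinset v = {nbT v} := by
    intro v h
    simp only [hnbTdef, dif_pos h]
    exact hnb v h
  have hadjnb : ∀ v, IsRootLeaf T root v → T.Adj v (nbT v) := by
    intro v h
    have h1 : nbT v ∈ T.neighborFinset v := by
      rw [hnbT v h]; exact Finset.mem_singleton_self _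
    exact (T.mem_neighborFinset v (nbT v)).1 h1
  -- the E₂ count
  have hF2card : (((Finset.univ.filter (fun v => IsRootLeaf T root v)).filter
        (fun v => ¬ T.Adj root v)).card)
      = (T.edgeFinset.filter
          (fun e => (∃ x ∈ e, IsRootLeaf T root x) ∧ root ∉ e)).card := by
    apply Finset.card_bij (fun v _ => s(v, nbT v))
    · intro v hv
      simp only [Finset.mem_filter, Finset.mem_univ, true_and] at hv
      obtain ⟨hlf, hnadj⟩ := hv
      simp only [Finset.mem_filter, SimpleGraph.mem_edgeFinset, SimpleGraph.mem_edgeSet]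
      refine ⟨hadjnb v hlf, ⟨v, Sym2.mem_mk_left _ _, hlf⟩, ?_⟩
      intro hr
      rcases Sym2.mem_iff.mp hr with h | h
      · exact hlf.1 h.symm
      · apply hnadj
        have h2 := hadjnb v hlf
        rw [← h] at h2
        exact h2.symm
    · intro v1 h1 v2 h2 heq
      simp only [Finset.mem_filter, Finset.mem_univ, true_and] at h1 h2
      rcases Sym2.eq_iff.mp heq with ⟨h, -⟩ | ⟨ha, hb⟩
      · exact h
      · exfalso
        obtain ⟨p1, hp1, hd1⟩ := aux_exists_parent hT h1.1.1
        obtain ⟨p2, hp2, hd2⟩ := aux_exists_parent hT h2.1.1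
        have hp1' : p1 = v2 := by
          have hm : p1 ∈ T.neighborFinset v1 := (T.mem_neighborFinset v1 p1).2 hp1
          rw [hnbT v1 h1.1, Finset.mem_singleton] at hm
          rw [hm, hb]
        have hp2' : p2 = v1 := by
          have hm : p2 ∈ T.neighborFinset v2 := (T.mem_neighborFinset v2 p2).2 hp2
          rw [hnbT v2 h2.1, Finset.mem_singleton] at hm
          rw [hm, ← ha]
        rw [hp1'] at hd1
        rw [hp2'] at hd2
        omega
    · intro e he
      simp only [Finset.mem_filter, SimpleGraph.mem_edgeFinset] at he
      obtain ⟨hee, ⟨x, hxe, hxl⟩, hroot⟩ := he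
      have hadjx : T.Adj x (Sym2.Mem.other hxe) := by
        have h1 := Sym2.other_spec hxe
        rw [← h1] at hee
        exact (T.mem_edgeSet).mp hee
      have hother : Sym2.Mem.other hxe = nbT x := by
        have hm : Sym2.Mem.other hxe ∈ T.neighborFinset x := (T.mem_neighborFinset x _).2 hadjx
        rwa [hnbT x hxl, Finset.mem_singleton] at hm
      refine ⟨x, ?_, ?_⟩
      · simp only [Finset.mem_filter, Finset.mem_univ, true_and]
        refine ⟨hxl, ?_⟩
        intro hadjrx
        apply hroot
        have hm : root ∈ T.neighborFinset x := (T.mem_neighborFinset x root).2 hadjrx.symm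
        rw [hnbT x hxl, Finset.mem_singleton] at hm
        rw [hm, ← hother]
        exact Sym2.other_mem hxe
      · rw [← hother]
        exact Sym2.other_spec hxe
  have hsplitL : ((Finset.univ.filter (fun v => IsRootLeaf T root v)).filter
        (fun v => T.Adj root v)).card
      + ((Finset.univ.filter (fun v => IsRootLeaf T root v)).filter
          (fun v => ¬ T.Adj root v)).card
      = (Finset.univ.filter (fun v => IsRootLeaf T root v)).card :=
    Finset.card_filter_add_card_filter_not _
  have hAA : ((Finset.univ.filter (fun v => IsRootLeaf T root v)).filter
        (fun v => T.Adj root v)).card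
      = ((T.neighborFinset root).filter (fun u => IsRootLeaf T root u)).card := by
    congr 1
    ext v
    simp only [Finset.mem_filter, Finset.mem_univ, true_and, SimpleGraph.mem_neighborFinset]
    tauto
  -- convert the set ncards to finset cards
  have hn2 : {e ∈ T.edgeSet | (∃ x ∈ e, IsRootLeaf T root x) ∧ root ∉ e}.ncard
      = (T.edgeFinset.filter
          (fun e => (∃ x ∈ e, IsRootLeaf T root x) ∧ root ∉ e)).card := by
    rw [← Set.ncard_coe_finset]
    congr 1
    ext e
    simp [SimpleGraph.mem_edgeFinset]
  have hn1 : {e ∈ T.edgeSet | root ∈ e ∧ ∀ x ∈ e, ¬ IsRootLeaf T root x}.ncard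
      = (T.edgeFinset.filter
          (fun e => root ∈ e ∧ ∀ x ∈ e, ¬ IsRootLeaf T root x)).card := by
    rw [← Set.ncard_coe_finset]
    congr 1
    ext e
    simp [SimpleGraph.mem_edgeFinset]
  rw [hn1, hn2, hsum1, hsum2, hsum3]
  omega
end
end

section
/- Let $T$ be a finite rooted tree that is not a spider (i.e., some non-root vertex has degree at least 3). Then $e(T) \geq e(\lceil T/2 \rceil) + e(\lfloor T/2 \rfloor) + 1$; in particular, $e(T) \geq 2\,e(\lfloor T/2 \rfloor) + 1$. -/
open Classical

noncomputable section

namespace Stmt8Aux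

open SimpleGraph Set

set_option linter.unusedSectionVars false

variable {V : Type*} [Fintype V] (T : SimpleGraph V) (hT : T.IsTree) (root : V)

include hT

/-- a chosen shortest path between two vertices -/
noncomputable def sp (x y : V) : T.Walk x y :=
  (hT.isConnected.exists_path_of_dist x y).choose

lemma sp_isPath (x y : V) : (sp T hT x y).IsPath :=
  (hT.isConnected.exists_path_of_dist x y).choose_spec.1

lemma sp_length (x y : V) : (sp T hT x y).length = T.dist x y :=
  (hT.isConnected.exists_path_of_dist x y).choose_spec.2

lemma dist_getVert {x y : V} (p : T.Walk x y) :
    p.length = T.dist x y → ∀ i, i ≤ p.length →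
      T.dist x (p.getVert i) = i ∧ T.dist (p.getVert i) y = p.length - i := by
  induction p with
  | nil =>
    intro _ i hi
    have hi0 : i = 0 := Nat.le_zero.mp hi
    subst hi0
    simp [SimpleGraph.Walk.getVert_zero, SimpleGraph.dist_self]
  | @cons a b c h q ih =>
    intro hp i hi
    have htri := hT.isConnected.dist_triangle (u := a) (v := b) (w := c)
    have hab : T.dist a b = 1 := SimpleGraph.dist_eq_one_iff_adj.mpr h
    have hbc : T.dist b c ≤ q.length := SimpleGraph.dist_le q
    have hlen : (SimpleGraph.Walk.cons h q).length = q.length + 1 :=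
      SimpleGraph.Walk.length_cons h q
    have hq : q.length = T.dist b c := by omega
    cases i with
    | zero =>
      refine ⟨by simp [SimpleGraph.dist_self], ?_⟩
      rw [SimpleGraph.Walk.getVert_zero]
      omega
    | succ j =>
      have hj : j ≤ q.length := by omega
      obtain ⟨ih1, ih2⟩ := ih hq j hj
      rw [SimpleGraph.Walk.getVert_cons_succ]
      have t1 := hT.isConnected.dist_triangle (u := a) (v := b) (w := q.getVert j)
      have t2 := hT.isConnected.dist_triangle (u := a) (v := q.getVert j) (w := c)
      constructor <;> omega

omit hT in
lemma length_drop {u v : V} (p : T.Walk u v) (n : ℕ) :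
    (p.drop n).length = p.length - n := by
  induction p generalizing n with
  | nil => cases n <;> simp [SimpleGraph.Walk.drop]
  | cons h q ih =>
    cases n with
    | zero => simp [SimpleGraph.Walk.drop]
    | succ n => simp [SimpleGraph.Walk.drop, ih, Nat.succ_sub_succ]

omit hT in
lemma getVert_drop {u v : V} (p : T.Walk u v) (n m : ℕ) :
    (p.drop n).getVert m = p.getVert (n + m) := by
  induction p generalizing n with
  | nil => cases n <;> rfl
  | cons h q ih =>
    cases n with
    | zero => simp [SimpleGraph.Walk.drop]
    | succ n =>
      simp only [SimpleGraph.Walk.drop, SimpleGraph.Walk.getVert_copy,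
        Nat.succ_add, SimpleGraph.Walk.getVert_cons_succ]
      exact ih n

lemma path_length_eq_dist {x y : V} (p : T.Walk x y) (hp : p.IsPath) :
    p.length = T.dist x y := by
  have h := hT.IsAcyclic.path_unique ⟨p, hp⟩ ⟨sp T hT x y, sp_isPath T hT x y⟩
  have : p = sp T hT x y := congrArg Subtype.val h
  rw [this, sp_length]

lemma lam_eq_zero_iff {v : V} : T.dist root v = 0 ↔ v = root := by
  rw [hT.isConnected.dist_eq_zero_iff]
  exact eq_comm

omit hT in
lemma desc_refl (v : V) : Desc T root v v := by
  unfold Desc; simp [SimpleGraph.dist_self]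

omit hT in
lemma desc_root (v : V) : Desc T root root v := by
  unfold Desc; simp [SimpleGraph.dist_self]

lemma desc_trans {u v w : V} (h1 : Desc T root u v) (h2 : Desc T root v w) :
    Desc T root u w := by
  unfold Desc at *
  have t1 := hT.isConnected.dist_triangle (u := root) (v := u) (w := w)
  have t2 := hT.isConnected.dist_triangle (u := u) (v := v) (w := w)
  have t3 := hT.isConnected.dist_triangle (u := root) (v := v) (w := w)
  omega

omit hT in
lemma desc_lam_le {u w : V} (h : Desc T root u w) : T.dist root u ≤ T.dist root w := by
  unfold Desc at h; omega

lemma desc_eq_of_lam_eq {u w : V} (h : Desc T root u w)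
    (hl : T.dist root u = T.dist root w) : u = w := by
  unfold Desc at h
  have : T.dist u w = 0 := by omega
  exact (hT.isConnected.dist_eq_zero_iff).mp this

/-- the ancestor of `w` at level `ℓ` -/
noncomputable def anc (w : V) (ℓ : ℕ) : V := (sp T hT root w).getVert ℓ

lemma anc_desc {w : V} {ℓ : ℕ} (hℓ : ℓ ≤ T.dist root w) :
    Desc T root (anc T hT root w ℓ) w ∧ T.dist root (anc T hT root w ℓ) = ℓ := by
  have hlen := sp_length T hT root w
  obtain ⟨h1, h2⟩ := dist_getVert T hT (sp T hT root w) hlen ℓ (by omega)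
  have : Desc T root (anc T hT root w ℓ) w := by
    unfold Desc anc at *
    omega
  exact ⟨this, h1⟩

lemma desc_anc_eq {v w : V} (h : Desc T root v w) :
    anc T hT root w (T.dist root v) = v := by
  classical
  have hq : ((sp T hT root v).append (sp T hT v w)).length = T.dist root w := by
    rw [SimpleGraph.Walk.length_append, sp_length, sp_length]
    exact h
  have hqp : ((sp T hT root v).append (sp T hT v w)).IsPath :=
    SimpleGraph.Walk.isPath_of_length_eq_dist _ hq
  have huniq := hT.IsAcyclic.path_unique
    ⟨sp T hT root w, sp_isPath T hT root w⟩
    ⟨(sp T hT root v).append (sp T hT v w), hqp⟩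
  have heq : sp T hT root w = (sp T hT root v).append (sp T hT v w) :=
    congrArg Subtype.val huniq
  unfold anc
  rw [heq, SimpleGraph.Walk.getVert_append]
  rw [sp_length]
  simp [SimpleGraph.Walk.getVert_zero]

lemma anc_unique {u v w : V} (h1 : Desc T root u w) (h2 : Desc T root v w)
    (hl : T.dist root u = T.dist root v) : u = v := by
  have e1 := desc_anc_eq T hT root h1
  have e2 := desc_anc_eq T hT root h2
  rw [hl] at e1
  exact e1.symm.trans e2

lemma desc_chain {u v w : V} (h1 : Desc T root u w) (h2 : Desc T root v w)
    (hl : T.dist root u ≤ T.dist root v) : Desc T root u v := by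
  classical
  set p := sp T hT root w with hp
  have hlen := sp_length T hT root w
  have hu : p.getVert (T.dist root u) = u := desc_anc_eq T hT root h1
  have hv : p.getVert (T.dist root v) = v := desc_anc_eq T hT root h2
  have hup : T.dist root u ≤ p.length := by
    rw [hlen]; exact desc_lam_le T root h1
  have hvp : T.dist root v ≤ p.length := by
    rw [hlen]; exact desc_lam_le T root h2
  -- the drop of p at level of u is a shortest walk from u to w
  have hdistu : T.dist u w = p.length - T.dist root u := by
    have := (dist_getVert T hT p hlen (T.dist root u) hup).2
    rw [hu] at this; exact this
  have hdl : (p.drop (T.dist root u)).length = T.dist (p.getVert (T.dist root u)) w := by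
    rw [length_drop T, hu, hdistu]
  obtain ⟨hd1, _⟩ := dist_getVert T hT (p.drop (T.dist root u)) hdl
      (T.dist root v - T.dist root u) (by rw [length_drop T]; omega)
  rw [getVert_drop T] at hd1
  have harith : T.dist root u + (T.dist root v - T.dist root u) = T.dist root v := by omega
  rw [harith, hv, hu] at hd1
  unfold Desc
  omega

omit hT in
lemma le_lamMax {v w : V} (h : Desc T root v w) : T.dist root w ≤ lamMax T root v := by
  have hle := Finset.le_sup (f := fun w => if Desc T root v w then T.dist root w else 0)
    (Finset.mem_univ w)
  unfold lamMax
  simpa [h] using hle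

omit hT in
lemma lamMax_le {v : V} {k : ℕ} (h : ∀ w, Desc T root v w → T.dist root w ≤ k) :
    lamMax T root v ≤ k := by
  unfold lamMax
  refine Finset.sup_le fun w _ => ?_
  split_ifs with hd
  · exact h w hd
  · exact Nat.zero_le k

omit hT in
lemma lam_le_lamMax (v : V) : T.dist root v ≤ lamMax T root v :=
  le_lamMax T root (desc_refl T root v)

lemma lamMax_mono {u v : V} (h : Desc T root u v) : lamMax T root v ≤ lamMax T root u :=
  lamMax_le T root fun w hw => le_lamMax T root (desc_trans T hT root h hw)

omit hT in
lemma exists_deep (v : V) : ∃ w, Desc T root v w ∧ T.dist root w = lamMax T root v := by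
  classical
  have hne : (Finset.univ : Finset V).Nonempty := ⟨root, Finset.mem_univ root⟩
  obtain ⟨w, -, hw⟩ := Finset.exists_mem_eq_sup Finset.univ hne
    (fun w => if Desc T root v w then T.dist root w else 0)
  by_cases hd : Desc T root v w
  · refine ⟨w, hd, ?_⟩
    unfold lamMax
    rw [hw, if_pos hd]
  · have h0 : lamMax T root v = 0 := by
      unfold lamMax
      rw [hw, if_neg hd]
    have h1 := lam_le_lamMax T root v
    exact ⟨v, desc_refl T root v, by omega⟩

/-- the finite set of deepest descendants of `v` -/
noncomputable def deepF (v : V) : Finset V :=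
  Finset.univ.filter (fun w => Desc T root v w ∧ T.dist root w = lamMax T root v)

omit hT in
lemma mem_deepF {v w : V} :
    w ∈ deepF T root v ↔ Desc T root v w ∧ T.dist root w = lamMax T root v := by
  unfold deepF
  simp

omit hT in
lemma deepF_img_nonempty (v : V) :
    ((deepF T root v).image (Fintype.equivFin V)).Nonempty := by
  obtain ⟨w, hw, hl⟩ := exists_deep T root v
  exact ⟨_, Finset.mem_image_of_mem _ ((mem_deepF T root).mpr ⟨hw, hl⟩)⟩

/-- a canonical deepest descendant of `v` -/
noncomputable def dd (v : V) : V :=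
  (Fintype.equivFin V).symm
    (((deepF T root v).image (Fintype.equivFin V)).min' (deepF_img_nonempty T root v))

omit hT in
lemma dd_mem (v : V) : dd T root v ∈ deepF T root v := by
  unfold dd
  have h := Finset.min'_mem ((deepF T root v).image (Fintype.equivFin V))
    (deepF_img_nonempty T root v)
  obtain ⟨w, hw, hwe⟩ := Finset.mem_image.mp h
  rw [← hwe, Equiv.symm_apply_apply]
  exact hw

omit hT in
lemma dd_min {v x : V} (hx : x ∈ deepF T root v) :
    Fintype.equivFin V (dd T root v) ≤ Fintype.equivFin V x := by
  unfold dd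
  rw [Equiv.apply_symm_apply]
  exact Finset.min'_le _ _ (Finset.mem_image_of_mem _ hx)

omit hT in
lemma dd_desc (v : V) : Desc T root v (dd T root v) := ((mem_deepF T root).mp (dd_mem T root v)).1

omit hT in
lemma dd_lam (v : V) : T.dist root (dd T root v) = lamMax T root v :=
  ((mem_deepF T root).mp (dd_mem T root v)).2

omit hT in
lemma dd_eq_of {b v : V} (hsub : deepF T root b ⊆ deepF T root v)
    (hmem : dd T root v ∈ deepF T root b) : dd T root v = dd T root b := by
  have h1 := dd_min T root hmem
  have h2 := dd_min T root (hsub (dd_mem T root b))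
  exact (Fintype.equivFin V).injective (le_antisymm h2 h1)

lemma par_exists {v : V} (h : v ≠ root) :
    ∃ u, T.Adj u v ∧ T.dist root u + 1 = T.dist root v := by
  have hd0 : T.dist root v ≠ 0 := fun h0 => h ((lam_eq_zero_iff T hT root).mp h0)
  have hlen : (sp T hT root v).length = T.dist root v := sp_length T hT root v
  refine ⟨(sp T hT root v).getVert ((sp T hT root v).length - 1), ?_, ?_⟩
  · have hadj := (sp T hT root v).adj_getVert_succ
      (i := (sp T hT root v).length - 1) (by omega)
    have he : (sp T hT root v).length - 1 + 1 = (sp T hT root v).length := by omega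
    rw [he, SimpleGraph.Walk.getVert_length] at hadj
    exact hadj
  · have := (dist_getVert T hT (sp T hT root v) hlen ((sp T hT root v).length - 1)
      (by omega)).1
    omega

/-- the parent of a vertex -/
noncomputable def par (v : V) : V :=
  if h : v = root then v else (par_exists T hT root h).choose

lemma par_spec {v : V} (h : v ≠ root) :
    T.Adj (par T hT root v) v ∧ T.dist root (par T hT root v) + 1 = T.dist root v := by
  unfold par
  rw [dif_neg h]
  exact (par_exists T hT root h).choose_spec

omit hT in
lemma desc_of_adj_lam {u v : V} (hadj : T.Adj u v)
    (hl : T.dist root u + 1 = T.dist root v) : Desc T root u v := by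
  have h1 : T.dist u v = 1 := SimpleGraph.dist_eq_one_iff_adj.mpr hadj
  unfold Desc
  omega

lemma par_unique {u v : V} (h : v ≠ root) (hadj : T.Adj u v)
    (hl : T.dist root u + 1 = T.dist root v) : u = par T hT root v := by
  obtain ⟨ha2, hl2⟩ := par_spec T hT root h
  exact anc_unique T hT root (desc_of_adj_lam T root hadj hl)
    (desc_of_adj_lam T root ha2 hl2) (by omega)

lemma adj_lam {x y : V} (h : T.Adj x y) :
    T.dist root x + 1 = T.dist root y ∨ T.dist root y + 1 = T.dist root x := by
  have hxy : T.dist x y = 1 := SimpleGraph.dist_eq_one_iff_adj.mpr h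
  have hyx : T.dist y x = 1 := SimpleGraph.dist_eq_one_iff_adj.mpr h.symm
  have t1 := hT.isConnected.dist_triangle (u := root) (v := x) (w := y)
  have t2 := hT.isConnected.dist_triangle (u := root) (v := y) (w := x)
  have hne : T.dist root x ≠ T.dist root y := by
    intro hd
    have hlen : (sp T hT root x).length = T.dist root x := sp_length T hT root x
    have hp : (sp T hT root x).IsPath := sp_isPath T hT root x
    by_cases hy : y ∈ (sp T hT root x).support
    · obtain ⟨i, hgv, hi⟩ := SimpleGraph.Walk.mem_support_iff_exists_getVert.mp hy
      have hdi := (dist_getVert T hT (sp T hT root x) hlen i hi).1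
      rw [hgv] at hdi
      have hil : i = (sp T hT root x).length := by omega
      rw [hil, SimpleGraph.Walk.getVert_length] at hgv
      exact h.ne hgv
    · have hys : y ∉ (sp T hT root x).reverse.support := by
        rwa [SimpleGraph.Walk.support_reverse, List.mem_reverse]
      have hq : (SimpleGraph.Walk.cons h.symm (sp T hT root x).reverse).IsPath :=
        hp.reverse.cons hys
      have hql := path_length_eq_dist T hT _ hq
      rw [SimpleGraph.Walk.length_cons, SimpleGraph.Walk.length_reverse] at hql
      rw [SimpleGraph.dist_comm] at hql
      omega
  omega

omit hT in
lemma lam_root : T.dist root root = 0 := SimpleGraph.dist_self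

lemma edgesIn_eq (S : Set V) (hroot : root ∈ S)
    (hcl : ∀ v ∈ S, v ≠ root → par T hT root v ∈ S) :
    edgesIn T S = {v | v ≠ root ∧ v ∈ S}.ncard := by
  have himg : {e ∈ T.edgeSet | ∀ x ∈ e, x ∈ S}
      = (fun v => s(par T hT root v, v)) '' {v | v ≠ root ∧ v ∈ S} := by
    ext e
    induction e using Sym2.ind with
    | _ x y =>
      simp only [Set.mem_setOf_eq, Set.mem_image]
      constructor
      · rintro ⟨he, hes⟩
        have hadj : T.Adj x y := he
        have hx : x ∈ S := hes x (Sym2.mem_mk_left x y)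
        have hy : y ∈ S := hes y (Sym2.mem_mk_right x y)
        rcases adj_lam T hT root hadj with hc | hc
        · have hyroot : y ≠ root := by
            intro hr
            rw [hr, lam_root] at hc
            omega
          refine ⟨y, ⟨hyroot, hy⟩, ?_⟩
          rw [← par_unique T hT root hyroot hadj hc]
        · have hxroot : x ≠ root := by
            intro hr
            rw [hr, lam_root] at hc
            omega
          refine ⟨x, ⟨hxroot, hx⟩, ?_⟩
          rw [← par_unique T hT root hxroot hadj.symm hc]
          exact Sym2.eq_swap
      · rintro ⟨v, ⟨hvroot, hvS⟩, heq⟩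
        rw [← heq]
        obtain ⟨ha, hl⟩ := par_spec T hT root hvroot
        refine ⟨ha, ?_⟩
        intro z hz
        rcases Sym2.mem_iff.mp hz with rfl | rfl
        · exact hcl v hvS hvroot
        · exact hvS
  unfold edgesIn
  rw [himg]
  apply Set.ncard_image_of_injOn
  intro u hu v hv heq
  rcases Sym2.eq_iff.mp heq with ⟨-, h2⟩ | ⟨h1, h2⟩
  · exact h2
  · obtain ⟨-, hlu⟩ := par_spec T hT root hu.1
    obtain ⟨-, hlv⟩ := par_spec T hT root hv.1
    rw [h1] at hlu
    rw [← h2] at hlv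
    omega

lemma edgeSet_ncard_eq : T.edgeSet.ncard = {v | v ≠ root}.ncard := by
  have h := edgesIn_eq T hT root Set.univ (Set.mem_univ root)
    (fun v _ _ => Set.mem_univ _)
  unfold edgesIn at h
  simpa using h

end Stmt8Aux

open Stmt8Aux

/-- if the finite rooted tree `T` is not a spider, then
`e(T) ≥ e(⌈T/2⌉) + e(⌊T/2⌋) + 1`, and in particular `e(T) ≥ 2 e(⌊T/2⌋) + 1`. -/
theorem stmt_8 {V : Type*} [Fintype V] (T : SimpleGraph V) (hT : T.IsTree) (root : V)
    (hnotspider : ∃ v, v ≠ root ∧ 3 ≤ degOf T v) :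
    edgesIn T (halfCeil T root) + edgesIn T (halfFloor T root) + 1 ≤ T.edgeSet.ncard ∧
      2 * edgesIn T (halfFloor T root) + 1 ≤ T.edgeSet.ncard := by
  classical
  obtain ⟨b, hbroot, hbdeg⟩ := hnotspider
  unfold degOf at hbdeg
  have hlamb_pos : T.dist root b ≠ 0 := fun h0 => hbroot ((lam_eq_zero_iff T hT root).mp h0)
  -- b has at least two children
  set Ch : Set V := {u | T.Adj b u ∧ T.dist root b + 1 = T.dist root u} with hCh
  have hsub : T.neighborSet b ⊆ insert (par T hT root b) Ch := by
    intro u hu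
    have hadj : T.Adj b u := hu
    rcases adj_lam T hT root hadj with hc | hc
    · exact Set.mem_insert_of_mem _ ⟨hadj, hc⟩
    · exact Set.mem_insert_iff.mpr (Or.inl (par_unique T hT root hbroot hadj.symm hc))
  have hch2 : 1 < Ch.ncard := by
    have h1 := Set.ncard_le_ncard hsub (Set.toFinite _)
    have h2 := Set.ncard_insert_le (par T hT root b) Ch
    omega
  obtain ⟨c1, c2, hc1, hc2, hc12⟩ := (Set.one_lt_ncard_iff (Set.toFinite _)).mp hch2
  -- choose a child c of b such that dd b is not a descendant of c
  obtain ⟨c, hcCh, hcnd⟩ : ∃ c, c ∈ Ch ∧ ¬ Desc T root c (dd T root b) := by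
    by_cases h1 : Desc T root c1 (dd T root b)
    · refine ⟨c2, hc2, fun h2 => hc12 ?_⟩
      exact anc_unique T hT root h1 h2 (by have := hc1.2; have := hc2.2; omega)
    · exact ⟨c1, hc1, h1⟩
  obtain ⟨hcadj, hclam⟩ := hcCh
  have hdbc : Desc T root b c := desc_of_adj_lam T root hcadj hclam
  -- the special uncovered vertex w
  set w : V := dd T root c with hw
  have hdcw : Desc T root c w := dd_desc T root c
  have hlamw : T.dist root w = lamMax T root c := dd_lam T root c
  have hlamc_le : T.dist root c ≤ T.dist root w := desc_lam_le T root hdcw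
  have hmw : lamMax T root w = T.dist root w := by
    have h1 := lamMax_mono T hT root hdcw
    have h2 := lam_le_lamMax T root w
    omega
  have hwlam2 : 2 ≤ T.dist root w := by omega
  have hwroot : w ≠ root := by
    intro h
    rw [h, lam_root] at hwlam2
    omega
  have hwnotceil : w ∉ halfCeil T root := by
    intro hmem
    have : T.dist root w ≤ (lamMax T root w + 1) / 2 := hmem
    omega
  -- the three vertex classes
  set N : Set V := {v | v ≠ root} with hN
  set NC : Set V := {v | v ≠ root ∧ v ∈ halfCeil T root} with hNC
  set NF : Set V := {v | v ≠ root ∧ v ∈ halfFloor T root} with hNF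
  set A0 : Set V := {v | v ≠ root ∧ v ∉ halfCeil T root} with hA0
  -- edge counts
  have hrootC : root ∈ halfCeil T root := by
    show T.dist root root ≤ _
    rw [lam_root]
    omega
  have hrootF : root ∈ halfFloor T root := by
    show T.dist root root ≤ _
    rw [lam_root]
    omega
  have hclC : ∀ v ∈ halfCeil T root, v ≠ root → par T hT root v ∈ halfCeil T root := by
    intro v hv hvr
    obtain ⟨hadj, hl⟩ := par_spec T hT root hvr
    have hdesc : Desc T root (par T hT root v) v := desc_of_adj_lam T root hadj hl
    have hmono := lamMax_mono T hT root hdesc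
    have hv' : T.dist root v ≤ (lamMax T root v + 1) / 2 := hv
    show T.dist root (par T hT root v) ≤ (lamMax T root (par T hT root v) + 1) / 2
    omega
  have hclF : ∀ v ∈ halfFloor T root, v ≠ root → par T hT root v ∈ halfFloor T root := by
    intro v hv hvr
    obtain ⟨hadj, hl⟩ := par_spec T hT root hvr
    have hdesc : Desc T root (par T hT root v) v := desc_of_adj_lam T root hadj hl
    have hmono := lamMax_mono T hT root hdesc
    have hv' : T.dist root v ≤ lamMax T root v / 2 := hv
    show T.dist root (par T hT root v) ≤ lamMax T root (par T hT root v) / 2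
    omega
  have heC : edgesIn T (halfCeil T root) = NC.ncard := edgesIn_eq T hT root _ hrootC hclC
  have heF : edgesIn T (halfFloor T root) = NF.ncard := edgesIn_eq T hT root _ hrootF hclF
  have heT : T.edgeSet.ncard = N.ncard := edgeSet_ncard_eq T hT root
  -- the injection from NF into A0 \ {w}
  set f : V → V := fun v => anc T hT root (dd T root v) (lamMax T root v + 1 - T.dist root v)
    with hf
  have hkey : ∀ v, v ≠ root → v ∈ halfFloor T root →
      Desc T root v (f v) ∧ Desc T root (f v) (dd T root v) ∧
      T.dist root (f v) = lamMax T root v + 1 - T.dist root v ∧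
      lamMax T root (f v) = lamMax T root v ∧
      2 * T.dist root v ≤ lamMax T root v ∧ 1 ≤ T.dist root v := by
    intro v hvr hvF
    have hvpos : T.dist root v ≠ 0 := fun h0 => hvr ((lam_eq_zero_iff T hT root).mp h0)
    have hfl : T.dist root v ≤ lamMax T root v / 2 := hvF
    have h2l : 2 * T.dist root v ≤ lamMax T root v := by omega
    have hddl : T.dist root (dd T root v) = lamMax T root v := dd_lam T root v
    have hℓ : lamMax T root v + 1 - T.dist root v ≤ T.dist root (dd T root v) := by omega
    obtain ⟨hfd', hfl2'⟩ := anc_desc T hT root hℓ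
    have hfd : Desc T root (f v) (dd T root v) := hfd'
    have hfl2 : T.dist root (f v) = lamMax T root v + 1 - T.dist root v := hfl2'
    have hvd : Desc T root v (dd T root v) := dd_desc T root v
    have hvf : Desc T root v (f v) := desc_chain T hT root hvd hfd (by
      rw [hfl2']
      omega)
    have hm1 : lamMax T root (f v) ≤ lamMax T root v := lamMax_mono T hT root hvf
    have hm2 : lamMax T root v ≤ lamMax T root (f v) := by
      have := le_lamMax T root hfd
      omega
    exact ⟨hvf, hfd, hfl2, by omega, h2l, by omega⟩
  have hmaps : ∀ v ∈ NF, f v ∈ A0 \ {w} := by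
    rintro v ⟨hvr, hvF⟩
    obtain ⟨hvf, hfd, hfl2, hfm, h2l, hpos⟩ := hkey v hvr hvF
    have hfroot : f v ≠ root := by
      intro h
      rw [h, lam_root] at hfl2
      omega
    have hfnotC : f v ∉ halfCeil T root := by
      intro hmem
      have : T.dist root (f v) ≤ (lamMax T root (f v) + 1) / 2 := hmem
      omega
    refine ⟨⟨hfroot, hfnotC⟩, ?_⟩
    -- f v ≠ w
    simp only [Set.mem_singleton_iff]
    intro hfw
    have hmveq : lamMax T root v = T.dist root w := by rw [← hmw, ← hfw, hfm]
    have hlamv1 : T.dist root v = 1 := by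
      rw [hfw] at hfl2
      omega
    have hddvw : dd T root v = w := by
      rw [hfw] at hfd
      refine (desc_eq_of_lam_eq T hT root hfd ?_).symm
      have hdl := dd_lam T root v
      omega
    have hdvw : Desc T root v w := by
      rw [← hddvw]
      exact dd_desc T root v
    have hdbw : Desc T root b w := desc_trans T hT root hdbc hdcw
    have hdvb : Desc T root v b := desc_chain T hT root hdvw hdbw (by omega)
    have hmb : lamMax T root b = lamMax T root v := by
      have h1 := lamMax_mono T hT root hdvb
      have h2 := le_lamMax T root hdbw
      omega
    have hsubF : deepF T root b ⊆ deepF T root v := by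
      intro x hx
      obtain ⟨hx1, hx2⟩ := (mem_deepF T root).mp hx
      exact (mem_deepF T root).mpr ⟨desc_trans T hT root hdvb hx1, by omega⟩
    have hmemF : dd T root v ∈ deepF T root b := by
      rw [hddvw]
      refine (mem_deepF T root).mpr ⟨hdbw, by omega⟩
    have hddb := dd_eq_of T root hsubF hmemF
    rw [hddvw] at hddb
    exact hcnd (hddb ▸ hdcw)
  have hinj : Set.InjOn f NF := by
    rintro u ⟨hur, huF⟩ v ⟨hvr, hvF⟩ heq
    obtain ⟨huf, -, hul, hum, hu2, hu1⟩ := hkey u hur huF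
    obtain ⟨hvf, -, hvl, hvm, hv2, hv1⟩ := hkey v hvr hvF
    have hmeq : lamMax T root u = lamMax T root v := by rw [← hum, ← hvm, heq]
    have hleq : T.dist root u = T.dist root v := by
      rw [heq] at hul
      omega
    rw [heq] at huf
    exact anc_unique T hT root huf hvf hleq
  -- counting
  have hwA0 : w ∈ A0 := ⟨hwroot, hwnotceil⟩
  have h1 : NF.ncard ≤ (A0 \ {w}).ncard :=
    Set.ncard_le_ncard_of_injOn f hmaps hinj (Set.toFinite _)
  have h2 : (A0 \ {w}).ncard + 1 = A0.ncard :=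
    Set.ncard_diff_singleton_add_one hwA0 (Set.toFinite _)
  have h3 : NC.ncard + A0.ncard = N.ncard := by
    rw [← Set.ncard_union_eq ?_ (Set.toFinite _) (Set.toFinite _)]
    · congr 1
      ext x
      simp only [hNC, hA0, hN, Set.mem_union, Set.mem_setOf_eq]
      tauto
    · rw [Set.disjoint_left]
      rintro x ⟨-, hx2⟩ ⟨-, hx4⟩
      exact hx4 hx2
  have h4 : NF.ncard ≤ NC.ncard := by
    refine Set.ncard_le_ncard ?_ (Set.toFinite _)
    rintro x ⟨hx1, hx2⟩
    refine ⟨hx1, ?_⟩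
    have : T.dist root x ≤ lamMax T root x / 2 := hx2
    show T.dist root x ≤ (lamMax T root x + 1) / 2
    omega
  constructor
  · omega
  · omega
end
end

section
/- Let $T'$ and $T''$ be finite trees rooted at $v_0'$ and $v_0''$, and let $\Phi' : T' \to Q_\infty$ and $\Phi'' : T'' \to Q_\infty$ be graph homomorphisms with $\Phi'(v_0')$ adjacent to $\Phi''(v_0'')$ in $Q_\infty$. Suppose (a) $\Phi'$ is path-distinct on $\lceil T'/2 \rceil$ and $\Phi''$ is path-distinct on $\lceil T''/2 \rceil$; (b) every edge in $\Phi'(\lceil T'/2 \rceil)$ has a different coordinate from every edge in $\Phi''(\lceil T''/2 \rceil)$; and (c) the coordinate of the edge $\Phi'(v_0')\Phi''(v_0'')$ differs from the coordinates of all edges in $\Phi'(\lceil T'/2 \rceil)$ and $\Phi''(\lceil T''/2 \rceil)$. Then the images $\Phi'(V(T'))$ and $\Phi''(V(T''))$ are disjoint. -/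
open Classical

noncomputable section

-- AUX START

lemma ecoord_mk {α : Type*} (g : α → ℕ → Bool) (a b : α) :
    ecoord g s(a, b) = coordOf (g a) (g b) := rfl

lemma coordOf_spec {x y : ℕ → Bool} (h : Qinf.Adj x y) (j : ℕ) :
    x j ≠ y j ↔ j = coordOf x y := by
  obtain ⟨i, hi, hall⟩ := h
  have hset : {j | x j ≠ y j} = {i} := by
    ext k
    simp only [Set.mem_setOf_eq, Set.mem_singleton_iff]
    constructor
    · intro hk; by_contra hki; exact hk (hall k hki)
    · rintro rfl; exact hi
  unfold coordOf
  rw [hset, csInf_singleton]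
  constructor
  · intro hj; by_contra hji; exact hj (hall j hji)
  · rintro rfl; exact hi

namespace SimpleGraph.Walk

variable {V : Type*} {G : SimpleGraph V} {u v w : V}

/-- take the first `n` darts of a walk -/
def wtake : {u v : V} → (p : G.Walk u v) → (n : ℕ) → G.Walk u (p.getVert n)
  | _, _, .nil, _ => .nil
  | _, _, .cons _ _, 0 => .nil
  | _, _, .cons h q, (n + 1) => Walk.cons h (q.wtake n)

@[simp] lemma wtake_nil {n : ℕ} : (Walk.nil : G.Walk u u).wtake n = .nil := rfl

@[simp] lemma wtake_cons_zero (h : G.Adj u v) (q : G.Walk v w) :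
    (Walk.cons h q).wtake 0 = .nil := rfl

@[simp] lemma wtake_cons_succ (h : G.Adj u v) (q : G.Walk v w) (n : ℕ) :
    (Walk.cons h q).wtake (n + 1) = Walk.cons h (q.wtake n) := rfl

lemma wtake_edges (p : G.Walk u v) (n : ℕ) :
    (p.wtake n).edges = p.edges.take n := by
  induction p generalizing n with
  | nil => simp
  | cons h q ih =>
    cases n with
    | zero => rfl
    | succ n => simp [ih]

lemma wtake_length (p : G.Walk u v) (n : ℕ) :
    (p.wtake n).length = min n p.length := by
  induction p generalizing n with
  | nil => simp
  | cons h q ih =>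
    cases n with
    | zero => rfl
    | succ n => simp [ih]

lemma wtake_getVert (p : G.Walk u v) {k n : ℕ} (hk : k ≤ n) :
    (p.wtake n).getVert k = p.getVert k := by
  induction p generalizing n k with
  | nil => simp
  | cons h q ih =>
    cases n with
    | zero => interval_cases k; rfl
    | succ n =>
      cases k with
      | zero => simp
      | succ k => simpa using ih (Nat.succ_le_succ_iff.mp hk)

lemma wtake_support_subset (p : G.Walk u v) (n : ℕ) :
    (p.wtake n).support ⊆ p.support := by
  induction p generalizing n with
  | nil => simp
  | cons h q ih =>
    cases n with
    | zero => show [_] ⊆ _; simp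
    | succ n =>
      simp only [wtake_cons_succ, support_cons]
      exact List.cons_subset_cons _ (ih n)

lemma wtake_isPath {p : G.Walk u v} (hp : p.IsPath) (n : ℕ) :
    (p.wtake n).IsPath := by
  induction p generalizing n with
  | nil => simp
  | cons h q ih =>
    cases n with
    | zero => exact IsPath.nil
    | succ n =>
      refine (cons_isPath_iff h (q.wtake n)).mpr ?_
      rw [cons_isPath_iff] at hp
      exact ⟨ih hp.1 n, fun hm => hp.2 (wtake_support_subset q n hm)⟩

lemma drop_length' (p : G.Walk u v) (n : ℕ) :
    (p.drop n).length = p.length - n := by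
  induction p generalizing n with
  | nil => simp [Walk.drop]
  | cons h q ih =>
    cases n with
    | zero => simp [Walk.drop]
    | succ n => simp [Walk.drop, ih]

end SimpleGraph.Walk

/-- parity of coordinate flips along a walk mapped into the hypercube -/
lemma walk_parity {α : Type*} {G : SimpleGraph α} {g : α → ℕ → Bool}
    (hg : ∀ a b, G.Adj a b → Qinf.Adj (g a) (g b)) :
    ∀ {a b : α} (p : G.Walk a b) (i : ℕ),
      (g a i = g b i) ↔ Even ((p.edges.map (ecoord g)).count i) := by
  intro a b p
  induction p with
  | nil => simp
  | @cons a b c h q ih =>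
    intro i
    have hadj := hg _ _ h
    rw [SimpleGraph.Walk.edges_cons, List.map_cons, List.count_cons, ecoord_mk]
    simp only [beq_iff_eq]
    by_cases hic : coordOf (g a) (g b) = i
    · have hne : g a i ≠ g b i := (coordOf_spec hadj i).mpr hic.symm
      have key : (g a i = g c i) ↔ ¬ (g b i = g c i) := by
        cases hx : g a i <;> cases hy : g b i <;> cases hz : g c i <;> simp_all
      rw [if_pos hic, key, ih i, Nat.even_add_one]
    · have heq : g a i = g b i := by
        by_contra hne
        exact hic ((coordOf_spec hadj i).mp hne).symm
      rw [if_neg hic, Nat.add_zero, heq]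
      exact ih i

/-- the central counting argument -/
lemma count_argument {A' B' A'' B'' : List ℕ} {c : ℕ}
    (hA' : A'.Nodup) (hA'' : A''.Nodup)
    (hdisj : ∀ a ∈ A', ∀ b ∈ A'', a ≠ b)
    (hc' : c ∉ A') (hc'' : c ∉ A'')
    (heven : ∀ i, Even ((A' ++ B' ++ c :: (A'' ++ B'')).count i)) :
    A'.length + A''.length + 1 ≤ B'.length + B''.length := by
  set L : List ℕ := A' ++ c :: A'' with hL
  have hLnd : L.Nodup := by
    rw [hL, List.nodup_append]
    refine ⟨hA', List.nodup_cons.mpr ⟨hc'', hA''⟩, ?_⟩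
    intro x hx y hmem hxy; subst hxy
    rcases List.mem_cons.mp hmem with rfl | hmem'
    · exact hc' hx
    · exact hdisj x hx x hmem' rfl
  have hsub : ∀ x ∈ L, x ∈ B' ++ B'' := by
    intro x hx
    have he := heven x
    have hcount : (A' ++ B' ++ c :: (A'' ++ B'')).count x =
        A'.count x + (if c = x then 1 else 0) + A''.count x
          + (B'.count x + B''.count x) := by
      simp [List.count_append, List.count_cons]
      ring
    have hone : A'.count x + (if c = x then 1 else 0) + A''.count x = 1 := by
      rw [hL] at hx
      rcases List.mem_append.mp hx with hx1 | hx2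
      · rw [List.count_eq_one_of_mem hA' hx1,
          List.count_eq_zero_of_not_mem (fun h => hdisj x hx1 x h rfl),
          if_neg (fun h : c = x => hc' (by rw [h]; exact hx1))]
      · rcases List.mem_cons.mp hx2 with rfl | hx3
        · rw [List.count_eq_zero_of_not_mem hc', List.count_eq_zero_of_not_mem hc'',
            if_pos rfl]
        · rw [List.count_eq_one_of_mem hA'' hx3,
            List.count_eq_zero_of_not_mem (fun h => hdisj x h x hx3 rfl),
            if_neg (fun h : c = x => hc'' (by rw [h]; exact hx3))]
    rw [hcount, hone] at he
    have hpos : 0 < B'.count x + B''.count x := by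
      rcases Nat.eq_zero_or_pos (B'.count x + B''.count x) with h0 | h1
      · rw [h0] at he; exact absurd he (by decide)
      · exact h1
    rw [← List.count_append] at hpos
    exact List.count_pos_iff.mp hpos
  have hlen : L.length ≤ (B' ++ B'').length := by
    calc L.length = L.toFinset.card := (List.toFinset_card_of_nodup hLnd).symm
      _ ≤ (B' ++ B'').toFinset.card := by
          apply Finset.card_le_card
          intro x hx
          simp only [List.mem_toFinset] at hx ⊢
          exact hsub x hx
      _ ≤ (B' ++ B'').length := (B' ++ B'').toFinset_card_le
  simp only [hL, List.length_append, List.length_cons] at hlen ⊢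
  omega

open SimpleGraph Walk in
lemma side_lemma {V : Type*} [Fintype V] {T : SimpleGraph V} (hT : T.IsTree) (r u : V)
    {g : V → ℕ → Bool} (hg : ∀ a b, T.Adj a b → Qinf.Adj (g a) (g b))
    (hpd : PathDistinctOn T r (halfCeil T r) g) :
    ∃ A B : List ℕ, A.Nodup ∧
      (∀ x ∈ A, ∃ a b, T.Adj a b ∧ a ∈ halfCeil T r ∧ b ∈ halfCeil T r ∧
        x = coordOf (g a) (g b)) ∧
      B.length ≤ A.length ∧
      (∀ i, (g r i = g u i) ↔ Even ((A ++ B).count i)) := by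
  obtain ⟨p, hpath, hplen⟩ := hT.isConnected.exists_path_of_dist r u
  set ℓ := p.length with hℓ
  set m := (ℓ + 1) / 2 with hm
  have hmℓ : m ≤ ℓ := by omega
  have hdru : T.dist r u = ℓ := hplen.symm
  have hhalf : ∀ k, k ≤ m → p.getVert k ∈ halfCeil T r := by
    intro k hk
    have hkℓ : k ≤ ℓ := le_trans hk hmℓ
    have d1 : T.dist r (p.getVert k) ≤ k := by
      have h1 := SimpleGraph.dist_le (p.wtake k)
      rw [wtake_length] at h1
      exact h1.trans (min_le_left _ _)
    have d2 : T.dist (p.getVert k) u ≤ ℓ - k := by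
      have h2 := SimpleGraph.dist_le (p.drop k)
      rwa [drop_length'] at h2
    have tri : T.dist r u ≤ T.dist r (p.getVert k) + T.dist (p.getVert k) u :=
      hT.isConnected.dist_triangle
    have hdk : T.dist r (p.getVert k) = k := by omega
    have hdesc : Desc T r (p.getVert k) u := by
      unfold Desc; omega
    have hlam : ℓ ≤ lamMax T r (p.getVert k) := by
      have hle := Finset.le_sup
        (f := fun w => if Desc T r (p.getVert k) w then T.dist r w else 0)
        (Finset.mem_univ u)
      simp only [hdesc, if_true, hdru] at hle
      exact hle
    show T.dist r (p.getVert k) ≤ (lamMax T r (p.getVert k) + 1) / 2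
    omega
  have hsupp : ∀ w ∈ (p.wtake m).support, w ∈ halfCeil T r := by
    intro w hw
    obtain ⟨k, hgv, hkle⟩ := Walk.mem_support_iff_exists_getVert.mp hw
    rw [wtake_length] at hkle
    have hkm : k ≤ m := hkle.trans (min_le_left _ _)
    rw [wtake_getVert p hkm] at hgv
    exact hgv ▸ hhalf k hkm
  have hAq : (p.edges.map (ecoord g)).take m = ((p.wtake m).edges.map (ecoord g)) := by
    rw [wtake_edges, List.map_take]
  refine ⟨(p.edges.map (ecoord g)).take m, (p.edges.map (ecoord g)).drop m, ?_, ?_, ?_, ?_⟩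
  · rw [hAq]
    have hmem : p.getVert m ∈ halfCeil T r := hhalf m le_rfl
    exact hpd _ hmem (p.wtake m) (wtake_isPath hpath m)
  · intro x hx
    rw [hAq] at hx
    obtain ⟨e, he, hxe⟩ := List.mem_map.mp hx
    induction e using Sym2.ind with
    | _ a b =>
      refine ⟨a, b, Walk.adj_of_mem_edges _ he, ?_, ?_, hxe.symm⟩
      · exact hsupp a (Walk.fst_mem_support_of_mem_edges _ he)
      · exact hsupp b (Walk.snd_mem_support_of_mem_edges _ he)
  · rw [List.length_take, List.length_drop, List.length_map, Walk.length_edges]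
    omega
  · intro i
    rw [List.take_append_drop]
    exact walk_parity hg p i


/-- Lemma 2.8: disjointness of images of two tree homomorphisms
into the infinite hypercube. -/
theorem stmt_10 {V' V'' : Type*} [Fintype V'] [Fintype V'']
    (T' : SimpleGraph V') (hT' : T'.IsTree) (r' : V')
    (T'' : SimpleGraph V'') (hT'' : T''.IsTree) (r'' : V'')
    (Φ' : V' → (ℕ → Bool)) (Φ'' : V'' → (ℕ → Bool))
    (hΦ' : ∀ a b, T'.Adj a b → Qinf.Adj (Φ' a) (Φ' b))
    (hΦ'' : ∀ a b, T''.Adj a b → Qinf.Adj (Φ'' a) (Φ'' b))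
    (hroots : Qinf.Adj (Φ' r') (Φ'' r''))
    -- (a): path-distinctness on the half-trees
    (ha' : PathDistinctOn T' r' (halfCeil T' r') Φ')
    (ha'' : PathDistinctOn T'' r'' (halfCeil T'' r'') Φ'')
    -- (b): edges of `Φ'(⌈T'/2⌉)` and `Φ''(⌈T''/2⌉)` use different coordinates
    (hb : ∀ a b a' b', T'.Adj a b → a ∈ halfCeil T' r' → b ∈ halfCeil T' r' →
      T''.Adj a' b' → a' ∈ halfCeil T'' r'' → b' ∈ halfCeil T'' r'' →
      coordOf (Φ' a) (Φ' b) ≠ coordOf (Φ'' a') (Φ'' b'))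
    -- (c): the coordinate of `Φ'(r')Φ''(r'')` differs from all of these
    (hc' : ∀ a b, T'.Adj a b → a ∈ halfCeil T' r' → b ∈ halfCeil T' r' →
      coordOf (Φ' r') (Φ'' r'') ≠ coordOf (Φ' a) (Φ' b))
    (hc'' : ∀ a b, T''.Adj a b → a ∈ halfCeil T'' r'' → b ∈ halfCeil T'' r'' →
      coordOf (Φ' r') (Φ'' r'') ≠ coordOf (Φ'' a) (Φ'' b)) :
    ∀ a b, Φ' a ≠ Φ'' b := by
  intro a b hab
  obtain ⟨A', B', hA'nd, hA'mem, hBA', hpar'⟩ := side_lemma hT' r' a hΦ' ha'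
  obtain ⟨A'', B'', hA''nd, hA''mem, hBA'', hpar''⟩ := side_lemma hT'' r'' b hΦ'' ha''
  set c := coordOf (Φ' r') (Φ'' r'') with hc
  have hdisj : ∀ x ∈ A', ∀ y ∈ A'', x ≠ y := by
    intro x hx y hy
    obtain ⟨a1, b1, hadj1, h1, h2, rfl⟩ := hA'mem x hx
    obtain ⟨a2, b2, hadj2, h3, h4, rfl⟩ := hA''mem y hy
    exact hb a1 b1 a2 b2 hadj1 h1 h2 hadj2 h3 h4
  have hcA' : c ∉ A' := by
    intro hx
    obtain ⟨a1, b1, hadj1, h1, h2, hx'⟩ := hA'mem c hx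
    exact hc' a1 b1 hadj1 h1 h2 hx'
  have hcA'' : c ∉ A'' := by
    intro hx
    obtain ⟨a1, b1, hadj1, h1, h2, hx'⟩ := hA''mem c hx
    exact hc'' a1 b1 hadj1 h1 h2 hx'
  have heven : ∀ i, Even ((A' ++ B' ++ c :: (A'' ++ B'')).count i) := by
    intro i
    have h1 := hpar' i
    have h2 := hpar'' i
    simp only [List.count_append] at h1 h2
    simp only [List.count_append, List.count_cons, beq_iff_eq]
    by_cases hic : i = c
    · have hne : Φ' r' i ≠ Φ'' r'' i := (coordOf_spec hroots i).mpr hic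
      have key : ¬ ((Φ' r' i = Φ' a i) ↔ (Φ'' r'' i = Φ'' b i)) := by
        have habi : Φ' a i = Φ'' b i := by rw [hab]
        cases hx : Φ' r' i <;> cases hy : Φ'' r'' i <;> cases hz : Φ'' b i <;>
          simp_all
      rw [h1, h2] at key
      rw [if_pos hic.symm]
      rw [Nat.even_iff] at key ⊢
      rw [Nat.even_iff] at key
      omega
    · have heq : Φ' r' i = Φ'' r'' i := by
        by_contra hne
        exact hic ((coordOf_spec hroots i).mp hne)
      have key : (Φ' r' i = Φ' a i) ↔ (Φ'' r'' i = Φ'' b i) := by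
        have habi : Φ' a i = Φ'' b i := by rw [hab]
        cases hx : Φ' r' i <;> cases hy : Φ'' r'' i <;> cases hz : Φ'' b i <;>
          simp_all
      rw [h1, h2] at key
      rw [if_neg (fun h => hic h.symm)]
      rw [Nat.even_iff] at key ⊢
      rw [Nat.even_iff] at key
      omega
  have hfin := count_argument hA'nd hA''nd hdisj hcA' hcA'' heven
  omega
end
end

section
/- Let $P_{n+1} = v_0 v_1 \cdots v_n$ be the path with $n$ edges and set $n' = \lfloor n/2 \rfloor + 1$. Let $G$ be a properly edge-colored subgraph of $Q_\infty$ with minimum degree $\delta(G) \geq n$. Then every doubly distinct homomorphism $\phi$ of the sub-path $v_0 \cdots v_{n'}$ into $G$ extends to a rainbow embedding of $P_{n+1}$ into $G$. -/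
open Classical

noncomputable section

lemma aux_diff_iff {x y : ℕ → Bool} (h : Qinf.Adj x y) (k : ℕ) :
    x k ≠ y k ↔ k = coordOf x y := by
  obtain ⟨i, hi, ho⟩ := h
  have hset : {j | x j ≠ y j} = {i} := by
    ext j
    simp only [Set.mem_setOf_eq, Set.mem_singleton_iff]
    constructor
    · intro hj
      by_contra hne
      exact hj (ho j hne)
    · rintro rfl; exact hi
  have hco : coordOf x y = i := by
    unfold coordOf
    rw [hset]
    exact csInf_singleton i
  rw [hco]
  constructor
  · intro hj; by_contra hne; exact hj (ho k hne)
  · rintro rfl; exact hi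

lemma aux_unique {x y y' : ℕ → Bool} (h : Qinf.Adj x y) (h' : Qinf.Adj x y')
    (hc : coordOf x y = coordOf x y') : y = y' := by
  funext k
  by_cases hk : k = coordOf x y
  · have h1 : x k ≠ y k := (aux_diff_iff h k).mpr hk
    have h2 : x k ≠ y' k := (aux_diff_iff h' k).mpr (hk.trans hc)
    revert h1 h2
    cases x k <;> cases y k <;> cases y' k <;> simp
  · have h1 : x k = y k := by
      by_contra hne; exact hk ((aux_diff_iff h k).mp hne)
    have h2 : x k = y' k := by
      by_contra hne; exact hk (((aux_diff_iff h' k).mp hne).trans hc.symm)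
    rw [← h1, ← h2]

lemma aux_flip (X : ℕ → ℕ → Bool) (a : ℕ) :
    ∀ b, a ≤ b → (∀ i, a ≤ i → i < b → Qinf.Adj (X i) (X (i+1))) → ∀ k,
      (X a k = X b k ↔
        Even (((Finset.Ico a b).filter (fun i => coordOf (X i) (X (i+1)) = k)).card)) := by
  refine Nat.le_induction ?_ ?_
  · intro _ k
    simp [Finset.Ico_self]
  · intro b hb IH hadj k
    have hadj' : ∀ i, a ≤ i → i < b → Qinf.Adj (X i) (X (i+1)) :=
      fun i h1 h2 => hadj i h1 (by omega)
    have hb_adj : Qinf.Adj (X b) (X (b+1)) := hadj b hb (by omega)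
    have hins : Finset.Ico a (b+1) = insert b (Finset.Ico a b) :=
      Nat.Ico_succ_right_eq_insert_Ico hb
    rw [hins, Finset.filter_insert]
    by_cases hk : coordOf (X b) (X (b+1)) = k
    · have hdiff : X b k ≠ X (b+1) k := (aux_diff_iff hb_adj k).mpr hk.symm
      rw [if_pos hk, Finset.card_insert_of_notMem (by simp)]
      have key : (X a k = X (b+1) k) ↔ ¬ (X a k = X b k) := by
        rcases Bool.eq_false_or_eq_true (X a k) with ha|ha <;>
          rcases Bool.eq_false_or_eq_true (X b k) with hbk|hbk <;>
            rcases Bool.eq_false_or_eq_true (X (b+1) k) with hb1|hb1 <;>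
              simp [ha, hbk, hb1] at hdiff ⊢
      rw [key, IH hadj' k]
      exact (Nat.even_add_one).symm
    · have heq : X b k = X (b+1) k := by
        by_contra hne
        exact hk ((aux_diff_iff hb_adj k).mp hne).symm
      rw [if_neg hk, ← heq]
      exact IH hadj' k

lemma aux_odd (γ : ℕ → ℕ) (n n' : ℕ)
    (HA : ∀ i j, i < j → j < n' → γ i ≠ γ j)
    (HB : ∀ i j, i < j → n' ≤ j → j < n → γ i = γ j → n + i + 1 ≤ 2*j)
    (a b : ℕ) (hab : a < b) (hbn : b ≤ n) :
    ∃ k, Odd (((Finset.Ico a b).filter (fun i => γ i = k)).card) := by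
  classical
  have cnt_succ : ∀ t k, a ≤ t →
      ((Finset.Ico a (t+1)).filter (fun i => γ i = k)).card
        = (if γ t = k then 1 else 0) + ((Finset.Ico a t).filter (fun i => γ i = k)).card := by
    intro t k hat
    rw [Nat.Ico_succ_right_eq_insert_Ico hat, Finset.filter_insert]
    by_cases h : γ t = k
    · rw [if_pos h, if_pos h, Finset.card_insert_of_notMem (by simp)]
      omega
    · rw [if_neg h, if_neg h]
      omega
  set O : ℕ → Finset ℕ := fun t => ((Finset.Ico a t).image γ).filter
      (fun k => Odd (((Finset.Ico a t).filter (fun i => γ i = k)).card)) with hO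
  have memO : ∀ t k, k ∈ O t ↔ Odd (((Finset.Ico a t).filter (fun i => γ i = k)).card) := by
    intro t k
    rw [hO]
    simp only [Finset.mem_filter, Finset.mem_image]
    constructor
    · exact fun h => h.2
    · intro h
      refine ⟨?_, h⟩
      have hpos : 0 < ((Finset.Ico a t).filter (fun i => γ i = k)).card := h.pos
      rw [Finset.card_pos] at hpos
      obtain ⟨i, hi⟩ := hpos
      rw [Finset.mem_filter] at hi
      exact ⟨i, hi.1, hi.2⟩
  have Oins : ∀ t, a ≤ t → γ t ∉ O t → O (t+1) = insert (γ t) (O t) := by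
    intro t hat hni
    rw [memO] at hni
    ext k
    rw [memO, Finset.mem_insert, memO, cnt_succ t k hat]
    by_cases hk : γ t = k
    · subst hk
      rw [if_pos rfl]
      constructor
      · intro _; exact Or.inl rfl
      · intro _
        rcases Nat.even_or_odd (((Finset.Ico a t).filter (fun i => γ i = γ t)).card) with he|ho
        · rw [Nat.add_comm]; exact Even.add_one he
        · exact absurd ho hni
    · rw [if_neg hk, Nat.zero_add]
      constructor
      · exact fun h => Or.inr h
      · rintro (h|h)
        · exact absurd h.symm hk
        · exact h
  have Oerase : ∀ t, a ≤ t → γ t ∈ O t → O (t+1) = (O t).erase (γ t) := by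
    intro t hat hin
    rw [memO] at hin
    ext k
    rw [memO, Finset.mem_erase, memO, cnt_succ t k hat]
    by_cases hk : γ t = k
    · subst hk
      rw [if_pos rfl]
      constructor
      · intro h
        exfalso
        rcases h with ⟨m, hm⟩
        rcases hin with ⟨m', hm'⟩
        omega
      · rintro ⟨hne, -⟩
        exact absurd rfl hne
    · rw [if_neg hk, Nat.zero_add]
      constructor
      · intro h; exact ⟨fun he => hk he.symm, h⟩
      · exact fun h => h.2
  have main : ∀ t, a + 1 ≤ t → t ≤ b → min (t - a) (n + 1 - t) ≤ (O t).card := by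
    refine Nat.le_induction ?_ ?_
    · intro htb
      have h1 : γ a ∈ O (a+1) := by
        rw [memO]
        have hcc : ((Finset.Ico a (a+1)).filter (fun i => γ i = γ a)).card = 1 := by
          rw [Nat.Ico_succ_singleton, Finset.filter_singleton, if_pos rfl,
            Finset.card_singleton]
        rw [hcc]
        exact odd_one
      have h2 : 0 < (O (a+1)).card := Finset.card_pos.mpr ⟨γ a, h1⟩
      omega
    · intro t ht IH htb1
      have htb : t ≤ b := by omega
      have hcard := IH htb
      have htn : t < n := by omega
      by_cases hc : 2*t ≤ n + a
      · have hni : γ t ∉ O t := by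
          intro hin
          rw [memO] at hin
          have hpos : 0 < ((Finset.Ico a t).filter (fun i => γ i = γ t)).card := hin.pos
          rw [Finset.card_pos] at hpos
          obtain ⟨i, hi⟩ := hpos
          rw [Finset.mem_filter, Finset.mem_Ico] at hi
          obtain ⟨⟨hai, hit⟩, hgi⟩ := hi
          by_cases htn' : t < n'
          · exact HA i t hit htn' hgi
          · have := HB i t hit (by omega) htn hgi
            omega
        have hcc : (O (t+1)).card = (O t).card + 1 := by
          rw [Oins t (by omega) hni, Finset.card_insert_of_notMem hni]
        omega
      · have hle : (O t).card ≤ (O (t+1)).card + 1 := by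
          by_cases hin : γ t ∈ O t
          · have h1 : (O (t+1)).card = (O t).card - 1 := by
              rw [Oerase t (by omega) hin, Finset.card_erase_of_mem hin]
            have h2 : 0 < (O t).card := Finset.card_pos.mpr ⟨_, hin⟩
            omega
          · have h1 : (O (t+1)).card = (O t).card + 1 := by
              rw [Oins t (by omega) hin, Finset.card_insert_of_notMem hin]
            omega
        omega
  have hb' := main b (by omega) le_rfl
  have hpos : 0 < (O b).card := by omega
  rw [Finset.card_pos] at hpos
  obtain ⟨k, hk⟩ := hpos
  exact ⟨k, (memO b k).mp hk⟩

/-- Proposition 2.7: every doubly distinct homomorphism of the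
first half `v₀ ⋯ v_{n'}` (with `n' = ⌊n/2⌋ + 1`) of the path `P_{n+1}` into a
properly edge-colored subgraph `G` of `Q_∞` of minimum degree at least `n`
extends to a rainbow embedding of the whole path `P_{n+1}`. -/
theorem stmt_11 {VG : Type*} [Fintype VG] {C : Type*}
    (G : SimpleGraph VG) (emb : VG → (ℕ → Bool))
    (hemb_inj : Function.Injective emb)
    (hemb : ∀ u v, G.Adj u v → Qinf.Adj (emb u) (emb v))
    (c : VG → VG → C)
    (hc_symm : ∀ u v, c u v = c v u)
    (hc_proper : ∀ u v w, G.Adj u v → G.Adj u w → v ≠ w → c u v ≠ c u w)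
    (n : ℕ) (hdelta : ∀ v, n ≤ degOf G v)
    (φ : ℕ → VG)
    -- `φ` is a homomorphism of the path `v₀ ⋯ v_{n'}` into `G`, where `n' = ⌊n/2⌋ + 1`
    (hφhom : ∀ i < n / 2 + 1, G.Adj (φ i) (φ (i + 1)))
    -- `φ` is rainbow
    (hφrainbow : ∀ i < n / 2 + 1, ∀ j < n / 2 + 1, i ≠ j →
      c (φ i) (φ (i + 1)) ≠ c (φ j) (φ (j + 1)))
    -- `φ` is distinctly directed
    (hφdir : ∀ i < n / 2 + 1, ∀ j < n / 2 + 1, i ≠ j →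
      coordOf (emb (φ i)) (emb (φ (i + 1))) ≠ coordOf (emb (φ j)) (emb (φ (j + 1)))) :
    ∃ Φ : ℕ → VG,
      (∀ i ≤ n / 2 + 1, Φ i = φ i) ∧
      (∀ i < n, G.Adj (Φ i) (Φ (i + 1))) ∧
      (∀ i ≤ n, ∀ j ≤ n, Φ i = Φ j → i = j) ∧
      (∀ i < n, ∀ j < n, i ≠ j → c (Φ i) (Φ (i + 1)) ≠ c (Φ j) (Φ (j + 1))) := by
  classical
  set n' : ℕ := n / 2 + 1 with hn'
  -- Build the extension step by step.
  have key : ∀ s : ℕ, s ≤ n - n' →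
      ∃ Ψ : ℕ → VG,
        (∀ i, i ≤ n' → Ψ i = φ i) ∧
        (∀ i, i < n' + s → G.Adj (Ψ i) (Ψ (i+1))) ∧
        (∀ i j, i < n' + s → j < n' + s → i ≠ j →
          c (Ψ i) (Ψ (i+1)) ≠ c (Ψ j) (Ψ (j+1))) ∧
        (∀ i j, i < j → j < n' + s → n' ≤ j →
          coordOf (emb (Ψ i)) (emb (Ψ (i+1))) = coordOf (emb (Ψ j)) (emb (Ψ (j+1))) →
          n + i + 1 ≤ 2*j) := by
    intro s
    induction s with
    | zero =>
      intro _
      refine ⟨φ, fun i _ => rfl, ?_, ?_, ?_⟩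
      · intro i hi
        exact hφhom i (by omega)
      · intro i j hi hj hij
        exact hφrainbow i (by omega) j (by omega) hij
      · intro i j hij hj hj' _
        omega
    | succ s IH =>
      intro hs1
      obtain ⟨Ψ, h0, h1, h2, h3⟩ := IH (by omega)
      set t := n' + s with ht
      have htn : t < n := by omega
      have htn' : n' ≤ t := by omega
      have ht1 : 1 ≤ t := by omega
      -- the neighborhood of the current endpoint
      have hfin : (G.neighborSet (Ψ t)).Finite := Set.toFinite _
      set N : Finset VG := hfin.toFinset with hN
      have hNcard : n ≤ N.card := by
        have hd := hdelta (Ψ t)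
        rw [degOf, Set.ncard_eq_toFinset_card _ hfin] at hd
        exact hd
      have hmemN : ∀ w, w ∈ N ↔ G.Adj (Ψ t) w := by
        intro w
        rw [hN, Set.Finite.mem_toFinset]
        exact SimpleGraph.mem_neighborSet G (Ψ t) w
      -- bad neighbors: repeated colors
      set B1 : Finset VG := N.filter
        (fun w => ∃ i, i < t ∧ c (Ψ t) w = c (Ψ i) (Ψ (i+1))) with hB1
      -- bad neighbors: forbidden coordinates (trailing window)
      set B2 : Finset VG := N.filter
        (fun w => ∃ i, i + 2 ≤ t ∧ 2*t ≤ n + i ∧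
          coordOf (emb (Ψ t)) (emb w) = coordOf (emb (Ψ i)) (emb (Ψ (i+1)))) with hB2
      have hB1card : B1.card ≤ t := by
        have hcc : B1.card ≤ ((Finset.range t).image (fun i => c (Ψ i) (Ψ (i+1)))).card := by
          apply Finset.card_le_card_of_injOn (fun w => c (Ψ t) w)
          · intro w hw
            simp only [Finset.mem_coe, hB1, Finset.mem_filter] at hw
            obtain ⟨-, i, hit, hci⟩ := hw
            exact Finset.mem_image.mpr ⟨i, Finset.mem_range.mpr hit, hci.symm⟩
          · intro w hw w' hw' hcc
            rw [Finset.mem_coe] at hw hw'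
            rw [hB1, Finset.mem_filter] at hw hw'
            by_contra hne
            exact hc_proper (Ψ t) w w' ((hmemN w).mp hw.1) ((hmemN w').mp hw'.1) hne hcc
        calc B1.card ≤ _ := hcc
          _ ≤ (Finset.range t).card := Finset.card_image_le
          _ = t := Finset.card_range t
      have hB2card : B2.card + t + 1 ≤ n := by
        have h2' : B2.card ≤ ((Finset.Ico (2*t - n) (t-1)).image
            (fun i => coordOf (emb (Ψ i)) (emb (Ψ (i+1))))).card := by
          apply Finset.card_le_card_of_injOn (fun w => coordOf (emb (Ψ t)) (emb w))
          · intro w hw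
            simp only [Finset.mem_coe, hB2, Finset.mem_filter] at hw
            obtain ⟨-, i, hi2, hi3, hce⟩ := hw
            exact Finset.mem_image.mpr ⟨i, Finset.mem_Ico.mpr ⟨by omega, by omega⟩, hce.symm⟩
          · intro w hw w' hw' hcc
            rw [Finset.mem_coe] at hw hw'
            rw [hB2, Finset.mem_filter] at hw hw'
            have haw : Qinf.Adj (emb (Ψ t)) (emb w) := hemb _ _ ((hmemN w).mp hw.1)
            have haw' : Qinf.Adj (emb (Ψ t)) (emb w') := hemb _ _ ((hmemN w').mp hw'.1)
            exact hemb_inj (aux_unique haw haw' hcc)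
        have h3' : ((Finset.Ico (2*t - n) (t-1)).image
            (fun i => coordOf (emb (Ψ i)) (emb (Ψ (i+1))))).card ≤ (t-1) - (2*t - n) := by
          calc _ ≤ (Finset.Ico (2*t-n) (t-1)).card := Finset.card_image_le
            _ = (t-1) - (2*t-n) := Nat.card_Ico _ _
        have hB2le : B2.card ≤ (t-1) - (2*t - n) := le_trans h2' h3'
        omega
      -- there is a good neighbor
      have hex : ∃ w ∈ N, w ∉ B1 ∧ w ∉ B2 := by
        by_contra hno
        push_neg at hno
        have hsub : N ⊆ B1 ∪ B2 := by
          intro w hw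
          by_cases h : w ∈ B1
          · exact Finset.mem_union_left _ h
          · exact Finset.mem_union_right _ (hno w hw h)
        have hc1 := Finset.card_le_card hsub
        have hc2 := Finset.card_union_le B1 B2
        omega
      obtain ⟨w, hwN, hwB1, hwB2⟩ := hex
      have hadj : G.Adj (Ψ t) w := (hmemN w).mp hwN
      have hcol : ∀ i, i < t → c (Ψ t) w ≠ c (Ψ i) (Ψ (i+1)) := by
        intro i hit hcontra
        exact hwB1 (by rw [hB1, Finset.mem_filter]; exact ⟨hwN, i, hit, hcontra⟩)
      have hcoord : ∀ i, i + 2 ≤ t → 2*t ≤ n + i →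
          coordOf (emb (Ψ t)) (emb w) ≠ coordOf (emb (Ψ i)) (emb (Ψ (i+1))) := by
        intro i hi1 hi2 hcontra
        exact hwB2 (by rw [hB2, Finset.mem_filter]; exact ⟨hwN, i, hi1, hi2, hcontra⟩)
      -- the new edge has a coordinate different from the previous edge
      have hprev : ∀ i, i + 1 = t →
          coordOf (emb (Ψ t)) (emb w) ≠ coordOf (emb (Ψ i)) (emb (Ψ (i+1))) := by
        intro i hi1 hcontra
        have hadjp : G.Adj (Ψ i) (Ψ (i+1)) := h1 i (by omega)
        have hq1 : Qinf.Adj (emb (Ψ t)) (emb w) := hemb _ _ hadj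
        have hq2 : Qinf.Adj (emb (Ψ t)) (emb (Ψ i)) := by
          have hsymm : G.Adj (Ψ (i+1)) (Ψ i) := hadjp.symm
          rw [hi1] at hsymm
          exact hemb _ _ hsymm
        have hc2 : coordOf (emb (Ψ t)) (emb w) = coordOf (emb (Ψ t)) (emb (Ψ i)) := by
          rw [hcontra, coordOf_symm, hi1]
        have hweq : w = Ψ i := hemb_inj (aux_unique hq1 hq2 hc2)
        apply hcol i (by omega)
        rw [hweq, hc_symm (Ψ t) (Ψ i), ← hi1]
      -- extend
      set Ψ' : ℕ → VG := Function.update Ψ (t+1) w with hΨ'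
      have hag : ∀ i, i ≤ t → Ψ' i = Ψ i := by
        intro i hi
        rw [hΨ']
        exact Function.update_of_ne (by omega) _ _
      have hup : Ψ' (t+1) = w := by
        rw [hΨ']
        exact Function.update_self _ _ _
      refine ⟨Ψ', ?_, ?_, ?_, ?_⟩
      · intro i hi
        rw [hag i (by omega)]
        exact h0 i hi
      · intro i hi
        by_cases hit : i < t
        · rw [hag i (by omega), hag (i+1) (by omega)]
          exact h1 i (by omega)
        · have hieq : i = t := by omega
          subst hieq
          rw [hag t le_rfl, hup]
          exact hadj
      · intro i j hi hj hij
        by_cases hit : i = t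
        · subst hit
          have hjt : j < t := by omega
          rw [hag t le_rfl, hup, hag j (by omega), hag (j+1) (by omega)]
          exact hcol j hjt
        · by_cases hjt : j = t
          · subst hjt
            have hit' : i < t := by omega
            rw [hag t le_rfl, hup, hag i (by omega), hag (i+1) (by omega)]
            exact fun hcc => hcol i hit' hcc.symm
          · rw [hag i (by omega), hag (i+1) (by omega), hag j (by omega), hag (j+1) (by omega)]
            exact h2 i j (by omega) (by omega) hij
      · intro i j hij hj hj' hcoordeq
        by_cases hjt : j = t
        · subst hjt
          rw [hag i (by omega), hag (i+1) (by omega), hag t le_rfl, hup] at hcoordeq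
          rcases Nat.lt_or_ge (i+1) t with hi2 | hi2
          · by_cases h2t : 2*t ≤ n + i
            · exact absurd hcoordeq.symm (hcoord i (by omega) h2t)
            · omega
          · exact absurd hcoordeq.symm (hprev i (by omega))
        · have hjt' : j < t := by omega
          rw [hag i (by omega), hag (i+1) (by omega), hag j (by omega),
            hag (j+1) (by omega)] at hcoordeq
          exact h3 i j hij (by omega) hj' hcoordeq
  obtain ⟨Φ, H0, H1, H2, H3⟩ := key (n - n') le_rfl
  have hcover : n ≤ n' + (n - n') := by omega
  have HAdj : ∀ i, i < n → G.Adj (Φ i) (Φ (i+1)) := fun i hi => H1 i (by omega)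
  have HA : ∀ i j, i < j → j < n' →
      (fun l => coordOf (emb (Φ l)) (emb (Φ (l+1)))) i ≠
        (fun l => coordOf (emb (Φ l)) (emb (Φ (l+1)))) j := by
    intro i j hij hj
    simp only
    rw [H0 i (by omega), H0 (i+1) (by omega), H0 j (by omega), H0 (j+1) (by omega)]
    exact hφdir i (by omega) j (by omega) (by omega)
  have HB : ∀ i j, i < j → n' ≤ j → j < n →
      (fun l => coordOf (emb (Φ l)) (emb (Φ (l+1)))) i =
        (fun l => coordOf (emb (Φ l)) (emb (Φ (l+1)))) j → n + i + 1 ≤ 2*j := by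
    intro i j hij hj hjn hcc
    exact H3 i j hij (by omega) hj hcc
  have hAux : ∀ i j, i < j → j ≤ n → Φ i ≠ Φ j := by
    intro i j hij hjn heq
    obtain ⟨k, hk⟩ := aux_odd (fun l => coordOf (emb (Φ l)) (emb (Φ (l+1)))) n n'
      HA HB i j hij hjn
    have hflip := aux_flip (fun l => emb (Φ l)) i j (le_of_lt hij)
      (fun l hl1 hl2 => hemb _ _ (HAdj l (by omega))) k
    rw [heq] at hflip
    have heven := hflip.mp rfl
    exact (Nat.not_odd_iff_even.mpr heven) hk
  refine ⟨Φ, fun i hi => H0 i hi, HAdj, ?_, fun i hi j hj hij => H2 i j (by omega) (by omega) hij⟩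
  intro i hi j hj heq
  rcases lt_trichotomy i j with h|h|h
  · exact absurd heq (hAux i j h hj)
  · exact h
  · exact absurd heq.symm (hAux j i h hi)
end
end
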